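/- arXiv:1910.11311 — 8 statements merged into one kernel-verified Lean document; each statement's English description precedes it below -/
import Mathlib

section
/- Fix parameters c_z, c_{-z}, β_z, β_{z1}, β_{z2}, γ_z > 0, let e_{z1} = β_{z1}β_{z2} + (β_{z1}+β_{z2})c_{-z} + c_{-z}², e_{z2} = c_z(β_{z2} + c_{-z}), e_{z3} = β_z β_{z2} + β_{z1} β_{z2} + β_{z1} c_{-z}, and let μ ≥ 0 and D ≥ 0. Then Q_z(μ) is invertible, and the unique solution m* ∈ ℝ³ of the equilibrium equation Q_z(μ) m* + (γ_z D, 0, 0) = 0 is m* = γ_z D · (β_{z2} c_z μ + e_{z1}, e_{z2} μ, c_z² μ²) / (β_{z2} c_z² μ² + e_{z3} c_z μ + e_{z1} β_z). -/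
/-!
`Q_z(μ)` has determinant `-(βz2 cz² μ² + ez3 cz μ + ez1 βz)`, which is negative for `μ ≥ 0`,
so the equilibrium is unique. The vector `(βz2 cz μ + ez1, ez2 μ, cz² μ²)` is the first column of
the adjugate of `Q_z(μ)`, hence `Q_z(μ)` maps it to `(det Q_z(μ), 0, 0)`; scaling it by
`-γz D / det Q_z(μ)` gives `m*` (Cramer's rule).
-/

open Matrix

/-- The 3×3 matrix `Q_z(μ)` of the fast ZEB1 mRNA/miRNA-complex dynamics
at fixed miRNA-200 concentration `μ`. -/
noncomputable def Qz (cz cmz βz βz1 βz2 μ : ℝ) : Matrix (Fin 3) (Fin 3) ℝ :=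
  !![-cz * μ - βz, cmz, 0;
     cz * μ, -βz1 - cz * μ - cmz, cmz;
     0, cz * μ, -cmz - βz2]

section

variable (cz cmz βz βz1 βz2 μ : ℝ)

theorem Qz_det :
    (Qz cz cmz βz βz1 βz2 μ).det =
      -(βz2 * cz ^ 2 * μ ^ 2 + (βz * βz2 + βz1 * βz2 + βz1 * cmz) * cz * μ +
        (βz1 * βz2 + (βz1 + βz2) * cmz + cmz ^ 2) * βz) := by
  simp only [Qz, det_fin_three, of_apply, cons_val', cons_val_zero, cons_val_one, cons_val,
    cons_val_fin_one]
  ring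

theorem Qz_mulVec_adjugate_col_zero :
    (Qz cz cmz βz βz1 βz2 μ) *ᵥ
        ![βz2 * cz * μ + (βz1 * βz2 + (βz1 + βz2) * cmz + cmz ^ 2),
          cz * (βz2 + cmz) * μ, cz ^ 2 * μ ^ 2] =
      ![(Qz cz cmz βz βz1 βz2 μ).det, 0, 0] := by
  rw [Qz_det]
  ext i
  fin_cases i <;>
    simp only [Qz, mulVec, dotProduct, Fin.sum_univ_three, Fin.zero_eta, Fin.mk_one, Fin.reduceFinMk,
      of_apply, cons_val', cons_val_zero, cons_val_one, cons_val, cons_val_fin_one] <;> ring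

end

theorem Qz_qss_general (cz cmz βz βz1 βz2 γz : ℝ)
    (hcz : 0 < cz) (hcmz : 0 < cmz) (hβz : 0 < βz) (hβz1 : 0 < βz1) (hβz2 : 0 < βz2)
    (μ D : ℝ) (hμ : 0 ≤ μ) :
    let ez1 : ℝ := βz1 * βz2 + (βz1 + βz2) * cmz + cmz ^ 2
    let ez2 : ℝ := cz * (βz2 + cmz)
    let ez3 : ℝ := βz * βz2 + βz1 * βz2 + βz1 * cmz
    let mstar : Fin 3 → ℝ :=
      (γz * D / (βz2 * cz ^ 2 * μ ^ 2 + ez3 * cz * μ + ez1 * βz)) •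
        ![βz2 * cz * μ + ez1, ez2 * μ, cz ^ 2 * μ ^ 2]
    (Qz cz cmz βz βz1 βz2 μ).det ≠ 0
    ∧ (Qz cz cmz βz βz1 βz2 μ).mulVec mstar + ![γz * D, 0, 0] = 0
    ∧ ∀ m : Fin 3 → ℝ,
        (Qz cz cmz βz βz1 βz2 μ).mulVec m + ![γz * D, 0, 0] = 0 → m = mstar := by
  intro ez1 ez2 ez3 mstar
  have hden : βz2 * cz ^ 2 * μ ^ 2 + ez3 * cz * μ + ez1 * βz =
      -(Qz cz cmz βz βz1 βz2 μ).det := by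
    rw [Qz_det, neg_neg]
  have hdet_neg : (Qz cz cmz βz βz1 βz2 μ).det < 0 := by
    rw [Qz_det, neg_lt_zero]
    positivity
  have hscale : γz * D / -(Qz cz cmz βz βz1 βz2 μ).det * (Qz cz cmz βz βz1 βz2 μ).det =
      -(γz * D) := by
    rw [div_neg, neg_mul, div_mul_cancel₀ _ hdet_neg.ne]
  have hsol : (Qz cz cmz βz βz1 βz2 μ) *ᵥ mstar + ![γz * D, 0, 0] = 0 := by
    rw [mulVec_smul, Qz_mulVec_adjugate_col_zero, hden]
    ext i
    fin_cases i <;> simp [hscale]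
  refine ⟨hdet_neg.ne, hsol, fun m hm => ?_⟩
  exact mulVec_injective_of_det_ne_zero hdet_neg.ne (add_right_cancel (hm.trans hsol.symm))

/-- `Q_z(μ)` is invertible, and the unique solution `m*` of
`Q_z(μ) m* + (γz D, 0, 0) = 0` is
`m* = γz D (βz2 cz μ + ez1, ez2 μ, cz² μ²)/(βz2 cz² μ² + ez3 cz μ + ez1 βz)`. -/
theorem Qz_qss (cz cmz βz βz1 βz2 γz : ℝ)
    (hcz : 0 < cz) (hcmz : 0 < cmz) (hβz : 0 < βz) (hβz1 : 0 < βz1) (hβz2 : 0 < βz2)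
    (hγz : 0 < γz) (μ D : ℝ) (hμ : 0 ≤ μ) (hD : 0 ≤ D) :
    let ez1 : ℝ := βz1 * βz2 + (βz1 + βz2) * cmz + cmz ^ 2
    let ez2 : ℝ := cz * (βz2 + cmz)
    let ez3 : ℝ := βz * βz2 + βz1 * βz2 + βz1 * cmz
    let mstar : Fin 3 → ℝ :=
      (γz * D / (βz2 * cz ^ 2 * μ ^ 2 + ez3 * cz * μ + ez1 * βz)) •
        ![βz2 * cz * μ + ez1, ez2 * μ, cz ^ 2 * μ ^ 2]
    (Qz cz cmz βz βz1 βz2 μ).det ≠ 0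
    ∧ (Qz cz cmz βz βz1 βz2 μ).mulVec mstar + ![γz * D, 0, 0] = 0
    ∧ ∀ m : Fin 3 → ℝ,
        (Qz cz cmz βz βz1 βz2 μ).mulVec m + ![γz * D, 0, 0] = 0 → m = mstar :=
  Qz_qss_general cz cmz βz βz1 βz2 γz hcz hcmz hβz hβz1 hβz2 μ D hμ
end

section
/- Assume all parameters of the reduced EMT/MET system are positive. Then the boundary of the nonnegative orthant is repelling: for every x in the closed nonnegative orthant [0,∞)⁴ and every index i ∈ {1,2,3,4}, if the i-th coordinate of x is zero then G_i(x) > 0. In particular, G has no equilibria on the boundary of [0,∞)⁴. -/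
/-! Each component of `G` is a production term minus a linear degradation term `k xᵢ`.
On the face `xᵢ = 0` the degradation vanishes, and the production terms are positive on
the orthant: rational functions with positive coefficients (the `s`-production needs
`μ34 ≥ 0`), while `z` has the basal production `δz > 0`. -/

/-- Parameters of the reduced EMT/MET system. `βm34` denotes `β₋34`, `cms` denotes
`c₋s`, `kms` denotes `k₋s`, etc. -/
structure EMTParams where
  β34 : ℝ
  βm34 : ℝ
  β200 : ℝ
  βm200 : ℝ
  E34 : ℝ
  E200 : ℝ
  ES : ℝ
  EZ : ℝ
  As : ℝ
  Az : ℝ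
  γs : ℝ
  γz : ℝ
  cs : ℝ
  cms : ℝ
  cz : ℝ
  cmz : ℝ
  βs : ℝ
  βs1 : ℝ
  βs2 : ℝ
  βz : ℝ
  βz1 : ℝ
  βz2 : ℝ
  ks : ℝ
  ks1 : ℝ
  ks2 : ℝ
  kms : ℝ
  kz : ℝ
  kz1 : ℝ
  kz2 : ℝ
  kmz : ℝ
  δz : ℝ

namespace EMTParams

/-- All parameters are positive. -/
def Pos (p : EMTParams) : Prop :=
  0 < p.β34 ∧ 0 < p.βm34 ∧ 0 < p.β200 ∧ 0 < p.βm200 ∧ 0 < p.E34 ∧ 0 < p.E200 ∧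
  0 < p.ES ∧ 0 < p.EZ ∧ 0 < p.As ∧ 0 < p.Az ∧ 0 < p.γs ∧ 0 < p.γz ∧
  0 < p.cs ∧ 0 < p.cms ∧ 0 < p.cz ∧ 0 < p.cmz ∧
  0 < p.βs ∧ 0 < p.βs1 ∧ 0 < p.βs2 ∧ 0 < p.βz ∧ 0 < p.βz1 ∧ 0 < p.βz2 ∧
  0 < p.ks ∧ 0 < p.ks1 ∧ 0 < p.ks2 ∧ 0 < p.kms ∧
  0 < p.kz ∧ 0 < p.kz1 ∧ 0 < p.kz2 ∧ 0 < p.kmz ∧ 0 < p.δz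

/-- The mixed-inhibition conditions: miRNA binding accelerates mRNA degradation
(`βs < βs1 < βs2`, `βz < βz1 < βz2`) and inhibits translation
(`ks > ks1 > ks2`, `kz > kz1 > kz2`). -/
def MixedInhibition (p : EMTParams) : Prop :=
  p.βs < p.βs1 ∧ p.βs1 < p.βs2 ∧ p.βz < p.βz1 ∧ p.βz1 < p.βz2 ∧
  p.ks1 < p.ks ∧ p.ks2 < p.ks1 ∧ p.kz1 < p.kz ∧ p.kz2 < p.kz1

def es1 (p : EMTParams) : ℝ := p.βs1 * p.βs2 + (p.βs1 + p.βs2) * p.cms + p.cms ^ 2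
def es2 (p : EMTParams) : ℝ := p.cs * (p.βs2 + p.cms)
def es3 (p : EMTParams) : ℝ := p.βs * p.βs2 + p.βs1 * p.βs2 + p.βs1 * p.cms
def ez1 (p : EMTParams) : ℝ := p.βz1 * p.βz2 + (p.βz1 + p.βz2) * p.cmz + p.cmz ^ 2
def ez2 (p : EMTParams) : ℝ := p.cz * (p.βz2 + p.cmz)
def ez3 (p : EMTParams) : ℝ := p.βz * p.βz2 + p.βz1 * p.βz2 + p.βz1 * p.cmz

/-- The vector field `G` of the reduced EMT/MET system, with state
`x = (μ34, s, μ200, z)`.  The quasi-steady-state mRNA vectors `ms`, `mz` have been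
substituted, and the dot products `(ks,ks1,ks2)·ms` and `(kz,kz1,kz2)·mz` written
out explicitly. -/
noncomputable def G (p : EMTParams) (x : Fin 4 → ℝ) : Fin 4 → ℝ :=
  let μ34 := x 0
  let s := x 1
  let μ200 := x 2
  let z := x 3
  ![ p.β34 * p.E34 * p.As * p.Az / ((s ^ 2 + p.As) * (z ^ 2 + p.Az)) - p.βm34 * μ34,
     (p.γs * p.ES * p.As / ((s ^ 2 + p.As) *
         (p.βs2 * p.cs ^ 2 * μ34 ^ 2 + p.es3 * p.cs * μ34 + p.es1 * p.βs))) *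
       (p.ks * (p.βs2 * p.cs * μ34 + p.es1) + p.ks1 * (p.es2 * μ34)
          + p.ks2 * (p.cs ^ 2 * μ34 ^ 2)) - p.kms * s,
     p.β200 * p.E200 * p.As * p.Az / ((s ^ 2 + p.As) * (z ^ 2 + p.Az)) - p.βm200 * μ200,
     p.δz + (p.γz * p.EZ * s ^ 2 * z ^ 2 / ((s ^ 2 + p.As) * (z ^ 2 + p.Az) *
         (p.βz2 * p.cz ^ 2 * μ200 ^ 2 + p.ez3 * p.cz * μ200 + p.ez1 * p.βz))) *
       (p.kz * (p.βz2 * p.cz * μ200 + p.ez1) + p.kz1 * (p.ez2 * μ200)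
          + p.kz2 * (p.cz ^ 2 * μ200 ^ 2)) - p.kmz * z ]

variable {p : EMTParams} {x : Fin 4 → ℝ}

theorem es1_pos (hp : p.Pos) : 0 < p.es1 := by
  obtain ⟨-, -, -, -, -, -, -, -, -, -, -, -, -, hcms, -, -, -, hβs1, hβs2, -⟩ := hp
  unfold es1; positivity

theorem es2_pos (hp : p.Pos) : 0 < p.es2 := by
  obtain ⟨-, -, -, -, -, -, -, -, -, -, -, -, hcs, hcms, -, -, -, -, hβs2, -⟩ := hp
  unfold es2; positivity

theorem es3_pos (hp : p.Pos) : 0 < p.es3 := by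
  obtain ⟨-, -, -, -, -, -, -, -, -, -, -, -, -, hcms, -, -, hβs, hβs1, hβs2, -⟩ := hp
  unfold es3; positivity

theorem G_zero_pos (hp : p.Pos) (h : x 0 = 0) : 0 < p.G x 0 := by
  obtain ⟨hβ34, -, -, -, hE34, -, -, -, hAs, hAz, -⟩ := hp
  simp only [G, Matrix.cons_val_zero, h, mul_zero, sub_zero]
  positivity

theorem G_one_pos (hp : p.Pos) (hμ34 : 0 ≤ x 0) (h : x 1 = 0) : 0 < p.G x 1 := by
  have := es1_pos hp; have := es2_pos hp; have := es3_pos hp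
  obtain ⟨-, -, -, -, -, -, hES, -, hAs, -, hγs, -, hcs, -, -, -, hβs, -, hβs2, -, -, -,
    hks, hks1, hks2, -⟩ := hp
  simp only [G, Matrix.cons_val_one, Matrix.cons_val_zero, h, mul_zero, sub_zero]
  positivity

theorem G_two_pos (hp : p.Pos) (h : x 2 = 0) : 0 < p.G x 2 := by
  obtain ⟨-, -, hβ200, -, -, hE200, -, -, hAs, hAz, -⟩ := hp
  simp only [G, Matrix.cons_val_two, Matrix.tail_cons, Matrix.head_cons, h, mul_zero,
    sub_zero]
  positivity

theorem G_three_pos (hp : p.Pos) (h : x 3 = 0) : 0 < p.G x 3 := by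
  obtain ⟨-, -, -, -, -, -, -, -, -, -, -, -, -, -, -, -, -, -, -, -, -, -, -, -, -, -, -, -, -, -,
    hδz⟩ := hp
  simpa [G, h] using hδz

theorem G_pos_of_eq_zero (hp : p.Pos) (hμ34 : 0 ≤ x 0) :
    ∀ i, x i = 0 → 0 < p.G x i
  | 0 => G_zero_pos hp
  | 1 => G_one_pos hp hμ34
  | 2 => G_two_pos hp
  | 3 => G_three_pos hp

end EMTParams

open EMTParams

/-- The boundary of the nonnegative orthant is repelling for the reduced EMT/MET
system: whenever a coordinate of `x ∈ [0,∞)⁴` vanishes, the corresponding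
component of the vector field is strictly positive.  In particular `G` has no
equilibria on the boundary of `[0,∞)⁴`. -/
theorem boundary_repelling (p : EMTParams) (hpos : p.Pos) :
    (∀ x : Fin 4 → ℝ, (∀ i, 0 ≤ x i) → ∀ i, x i = 0 → 0 < p.G x i)
    ∧ (∀ x : Fin 4 → ℝ, (∀ i, 0 ≤ x i) → (∃ i, x i = 0) → p.G x ≠ 0) := by
  refine ⟨fun x hx => G_pos_of_eq_zero hpos (hx 0), ?_⟩
  rintro x hx ⟨i, hi⟩ hG
  simpa [hG] using G_pos_of_eq_zero hpos (hx 0) i hi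
end

section
/- Let n ≥ 1 and let G : ℝⁿ → ℝⁿ be continuous on the closed nonnegative orthant [0,∞)ⁿ and satisfy: for every x ∈ [0,∞)ⁿ and every index i, if x_i = 0 then G_i(x) > 0. Let x : [0,∞) → (0,∞)ⁿ be a continuously differentiable solution of ẋ(t) = G(x(t)) whose image is bounded. Then every ω-limit point of x lies in the open positive orthant (0,∞)ⁿ; that is, the ω-limit set of the trajectory is disjoint from the boundary of [0,∞)ⁿ (persistence). -/
/-!
The closure `K` of the trajectory is compact and lies in the closed orthant, and `G i` is
positive on its face `y i = 0`; by compactness `G i` stays positive on the slab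
`K ∩ {y i ≤ δ}` for some `δ > 0`. Hence `x · i` is increasing whenever it sits at a level
`c ≤ δ`, so it never falls below `min δ (x 0 i)`, and neither does any ω-limit point.
-/

open Filter Set Topology

theorem IsCompact.exists_pos_forall_le_imp_pos {X : Type*} [TopologicalSpace X] {K : Set X}
    (hK : IsCompact K) {f g : X → ℝ} (hf : ContinuousOn f K) (hg : ContinuousOn g K)
    (hfg : ∀ y ∈ K, f y ≤ 0 → 0 < g y) : ∃ δ > 0, ∀ y ∈ K, f y ≤ δ → 0 < g y := by
  obtain ⟨a, ha, hfa⟩ :=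
    (hg.lowerSemicontinuousOn.isCompact_inter_preimage_Iic hK 0).exists_forall_le'
      (hf.mono inter_subset_left) (a := 0)
      fun y ⟨hyK, hgy⟩ => lt_of_not_ge fun hfy => (hfg y hyK hfy).not_ge hgy
  refine ⟨a / 2, half_pos ha, fun y hyK hfy => lt_of_not_ge fun hgy => ?_⟩
  linarith [hfa y ⟨hyK, hgy⟩]

theorem le_image_of_hasDerivWithinAt_Ici_of_deriv_pos_of_eq {f f' : ℝ → ℝ} {a c t : ℝ}
    (hf : ∀ s ∈ Ici a, HasDerivWithinAt f (f' s) (Ici a) s) (ha : c ≤ f a)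
    (hc : ∀ s ∈ Ici a, f s = c → 0 < f' s) (ht : a ≤ t) : c ≤ f t := by
  have := image_le_of_deriv_right_lt_deriv_boundary' (f := -f) (f' := -f') (B := fun _ => -c)
    (B' := 0) (b := t)
    (fun s hs => ((hf s hs.1).continuousWithinAt.mono Icc_subset_Ici_self).neg)
    (fun s hs => ((hf s hs.1).mono (Ici_subset_Ici.2 hs.1)).neg) (neg_le_neg ha)
    continuousOn_const (fun _ _ => hasDerivWithinAt_const _ _ _)
    (fun s hs hfs => neg_lt_zero.2 (hc s hs.1 (neg_inj.1 hfs))) (right_mem_Icc.2 ht)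
  exact neg_le_neg_iff.1 this

theorem isClosed_setOf_forall_nonneg (ι : Type*) : IsClosed {y : ι → ℝ | ∀ j, 0 ≤ y j} := by
  simpa only [ofPred_forall] using
    isClosed_iInter fun j => isClosed_le continuous_const (continuous_apply j)

theorem omega_limit_in_open_orthant_general (n : ℕ)
    (G : (Fin n → ℝ) → Fin n → ℝ)
    (hGcont : ContinuousOn G {x : Fin n → ℝ | ∀ i, 0 ≤ x i})
    (hrepel : ∀ x : Fin n → ℝ, (∀ i, 0 ≤ x i) → ∀ i, x i = 0 → 0 < G x i)
    (x : ℝ → Fin n → ℝ)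
    (hsol : ∀ t ∈ Set.Ici (0 : ℝ), HasDerivWithinAt x (G (x t)) (Set.Ici 0) t)
    (hxpos : ∀ t ∈ Set.Ici (0 : ℝ), ∀ i, 0 < x t i)
    (hbdd : Bornology.IsBounded (x '' Set.Ici 0))
    (pt : Fin n → ℝ)
    (hlim : ∃ tk : ℕ → ℝ, (∀ k, 0 ≤ tk k) ∧ Tendsto tk atTop atTop ∧
        Tendsto (fun k => x (tk k)) atTop (nhds pt)) :
    ∀ i, 0 < pt i := by
  obtain ⟨tk, htk0, -, htkx⟩ := hlim
  intro i
  set K := closure (x '' Ici 0)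
  have hxK : ∀ t ∈ Ici 0, x t ∈ K := fun t ht => subset_closure ⟨t, ht, rfl⟩
  have hKorth : K ⊆ {y | ∀ j, 0 ≤ y j} := closure_minimal
    (by rintro _ ⟨t, ht, rfl⟩ j; exact (hxpos t ht j).le) (isClosed_setOf_forall_nonneg _)
  obtain ⟨δ, hδ, hGpos⟩ := hbdd.isCompact_closure.exists_pos_forall_le_imp_pos
    (continuous_apply i).continuousOn
    ((continuous_apply i).comp_continuousOn (hGcont.mono hKorth))
    fun y hy hyi => hrepel y (hKorth hy) i (le_antisymm hyi (hKorth hy i))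
  have hlower : ∀ t ∈ Ici 0, min δ (x 0 i) ≤ x t i := fun t ht =>
    le_image_of_hasDerivWithinAt_Ici_of_deriv_pos_of_eq
      (fun s hs => hasDerivWithinAt_pi.1 (hsol s hs) i) (min_le_right _ _)
      (fun s hs hxs => hGpos _ (hxK s hs) (hxs ▸ min_le_left _ _)) ht
  calc 0 < min δ (x 0 i) := lt_min hδ (hxpos 0 self_mem_Ici i)
    _ ≤ pt i := ge_of_tendsto' (tendsto_pi_nhds.1 htkx i) fun k => hlower _ (htk0 k)

/-- Persistence: if the boundary of the nonnegative orthant is repelling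
(`x_i = 0` implies `G_i(x) > 0`) and `x : [0,∞) → (0,∞)ⁿ` is a bounded solution of
`ẋ = G(x)`, then every ω-limit point of the trajectory lies in the open positive
orthant, i.e. the ω-limit set is disjoint from the boundary of `[0,∞)ⁿ`. -/
theorem omega_limit_in_open_orthant (n : ℕ) (hn : 1 ≤ n)
    (G : (Fin n → ℝ) → Fin n → ℝ)
    (hGcont : ContinuousOn G {x : Fin n → ℝ | ∀ i, 0 ≤ x i})
    (hrepel : ∀ x : Fin n → ℝ, (∀ i, 0 ≤ x i) → ∀ i, x i = 0 → 0 < G x i)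
    (x : ℝ → Fin n → ℝ)
    (hsol : ∀ t ∈ Set.Ici (0 : ℝ), HasDerivWithinAt x (G (x t)) (Set.Ici 0) t)
    (hxpos : ∀ t ∈ Set.Ici (0 : ℝ), ∀ i, 0 < x t i)
    (hbdd : Bornology.IsBounded (x '' Set.Ici 0))
    (pt : Fin n → ℝ)
    (hlim : ∃ tk : ℕ → ℝ, (∀ k, 0 ≤ tk k) ∧ Tendsto tk atTop atTop ∧
        Tendsto (fun k => x (tk k)) atTop (nhds pt)) :
    ∀ i, 0 < pt i :=
  omega_limit_in_open_orthant_general n G hGcont hrepel x hsol hxpos hbdd pt hlim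
end

section
/- (Kamke's condition implies monotonicity.) Let W ⊆ ℝⁿ be open and p-convex with respect to ≤_σ for some σ ∈ {−1,1}ⁿ, and let F : W → ℝⁿ be continuously differentiable with Jacobian J(x) = ∂F/∂x. Assume σ_i σ_j J_{ij}(x) ≥ 0 for all i ≠ j and all x ∈ W (i.e., Σ J(x) Σ is Metzler, where Σ = diag(σ)). Then the flow of ẋ = F(x) is monotone with respect to ≤_σ: if x, y : [0,T] → W are solutions of ẋ = F(x) and ẏ = F(y) with x(0) ≤_σ y(0), then x(t) ≤_σ y(t) for all t ∈ [0,T]. -/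
/-!
At a first time `t₀` where `x ≤_σ y` fails, some coordinate `i` has `σᵢ xᵢ = σᵢ yᵢ`. The Kamke
sign condition makes `u ↦ σᵢ Fᵢ(u)` nondecreasing along `≤_σ`-segments of `W` on which `uᵢ` is
constant, so `σᵢ Fᵢ(x) ≤ σᵢ Fᵢ(y)` there and the gap `σᵢ (yᵢ - xᵢ)` cannot start to become
negative. To make this rigorous the gap is perturbed by `η e^{(L+1)(t-T)}`, where `L` is a
Lipschitz constant of `F` near the compact orbit of `x`: the perturbed gaps start positive, and at
a first zero the `≤_σ`-meet of `x` and `y` lies within `η` of `x`, so the Lipschitz error is beaten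
by the growth of the exponential. Letting `η → 0` gives the claim.
-/

open Set Filter Topology Metric

theorem forall_pos_of_hasDerivWithinAt_pos_of_eq_zero {ι : Type*} [Finite ι]
    {φ φ' : ι → ℝ → ℝ} {a b : ℝ}
    (hφ : ∀ i, ∀ t ∈ Icc a b, HasDerivWithinAt (φ i) (φ' i t) (Icc a b) t)
    (ha : ∀ i, 0 < φ i a)
    (hbdry : ∀ t ∈ Ioc a b, ∀ i, (∀ j, 0 ≤ φ j t) → φ i t = 0 → 0 < φ' i t) :
    ∀ t ∈ Icc a b, ∀ i, 0 < φ i t := by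
  by_contra! hbad
  have hcont : ∀ i, ContinuousOn (φ i) (Icc a b) :=
    fun i t ht => (hφ i t ht).continuousWithinAt
  set S := ⋃ i, Icc a b ∩ φ i ⁻¹' Iic 0
  have hS : IsCompact S := isCompact_Icc.of_isClosed_subset
    (isClosed_iUnion_of_finite fun i =>
      (hcont i).preimage_isClosed_of_isClosed isClosed_Icc isClosed_Iic)
    (iUnion_subset fun i => inter_subset_left)
  obtain ⟨t₀, ht₀S, hmin⟩ : ∃ t₀, IsLeast S t₀ := by
    obtain ⟨t, ht, i, hi⟩ := hbad
    exact hS.exists_isLeast ⟨t, mem_iUnion.2 ⟨i, ht, hi⟩⟩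
  obtain ⟨i, ht₀, hi⟩ := mem_iUnion.1 ht₀S
  have hpos : ∀ s ∈ Ico a t₀, ∀ j, 0 < φ j s := fun s hs j => by
    by_contra! hle
    exact hs.2.not_ge (hmin (mem_iUnion.2 ⟨j, ⟨hs.1, hs.2.le.trans ht₀.2⟩, hle⟩))
  have hat₀ : a < t₀ := ht₀.1.lt_of_ne fun h => (ha i).not_ge (h ▸ hi)
  have hsub : Ico a t₀ ⊆ Icc a b := fun s hs => ⟨hs.1, hs.2.le.trans ht₀.2⟩
  have : (𝓝[Ico a t₀] t₀).NeBot := right_nhdsWithin_Ico_neBot hat₀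
  have hnonneg : ∀ j, 0 ≤ φ j t₀ := fun j =>
    ge_of_tendsto (((hcont j) t₀ ht₀).mono hsub)
      (eventually_mem_nhdsWithin.mono fun s hs => (hpos s hs j).le)
  have hzero : φ i t₀ = 0 := le_antisymm hi (hnonneg i)
  have hslope : φ' i t₀ ≤ 0 := by
    have := (hasDerivWithinAt_iff_tendsto_slope' fun h => lt_irrefl t₀ h.2).1
      ((hφ i t₀ ht₀).mono hsub)
    refine le_of_tendsto this (eventually_mem_nhdsWithin.mono fun s hs => ?_)
    rw [slope_def_field, hzero, sub_zero]
    exact div_nonpos_of_nonneg_of_nonpos (hpos s hs i).le (sub_nonpos.2 hs.2.le)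
  exact hslope.not_gt (hbdry t₀ ⟨hat₀, ht₀.2⟩ i hnonneg hzero)

theorem IsCompact.exists_pos_norm_image_sub_le_on_closedBall {E F : Type*}
    [NormedAddCommGroup E] [NormedSpace ℝ E] [ProperSpace E]
    [NormedAddCommGroup F] [NormedSpace ℝ F] {K W : Set E} {f : E → F} {f' : E → E →L[ℝ] F}
    (hK : IsCompact K) (hW : IsOpen W) (hKW : K ⊆ W) (hf : ∀ x ∈ W, HasFDerivAt f (f' x) x)
    (hf' : ContinuousOn f' W) :
    ∃ δ > 0, ∃ L ≥ 0, ∀ a ∈ K,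
      closedBall a δ ⊆ W ∧ ∀ z ∈ closedBall a δ, ‖f z - f a‖ ≤ L * ‖z - a‖ := by
  obtain ⟨δ, hδ, hδW⟩ := hK.exists_thickening_subset_open hW hKW
  have hCW : cthickening (δ / 2) K ⊆ W :=
    (cthickening_subset_thickening' hδ (by linarith) K).trans hδW
  obtain ⟨L, hL⟩ := hK.cthickening.exists_bound_of_continuousOn (hf'.mono hCW)
  refine ⟨δ / 2, by positivity, max L 0, le_max_right _ _, fun a ha => ?_⟩
  have hBC : closedBall a (δ / 2) ⊆ cthickening (δ / 2) K := closedBall_subset_cthickening ha _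
  refine ⟨hBC.trans hCW, fun z hz => ?_⟩
  exact (convex_closedBall a _).norm_image_sub_le_of_norm_hasFDerivWithin_le
    (fun p hp => (hf p (hCW (hBC hp))).hasFDerivWithinAt)
    (fun p hp => (hL p (hBC hp)).trans (le_max_left _ _))
    (mem_closedBall_self (by positivity)) hz

section Orthant

variable {ι : Type*} [Fintype ι] {σ : ι → ℝ}

theorem exists_sign_le_of_sign_le_add (hσ : ∀ j, σ j = 1 ∨ σ j = -1) {a b : ι → ℝ} {e : ℝ}
    (hle : ∀ j, σ j * a j ≤ σ j * b j + e) {i : ι} (hi : σ i * b i ≤ σ i * a i) :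
    ∃ z, (∀ j, σ j * z j ≤ σ j * b j) ∧ z i = b i ∧ ‖z - a‖ ≤ e := by
  have hσσ : ∀ j, σ j * σ j = 1 := fun j => by rcases hσ j with h | h <;> simp [h]
  -- the `≤_σ`-meet of `a` and `b`
  set z : ι → ℝ := fun j => σ j * min (σ j * a j) (σ j * b j)
  have hσz : ∀ j, σ j * z j = min (σ j * a j) (σ j * b j) := fun j => by
    simp only [z, ← mul_assoc, hσσ, one_mul]
  refine ⟨z, fun j => hσz j ▸ min_le_right _ _, ?_, ?_⟩
  · exact mul_left_cancel₀ (left_ne_zero_of_mul_eq_one (hσσ i)) (min_eq_right hi ▸ hσz i)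
  · refine pi_norm_le_iff_of_nonneg (by linarith [hle i]) |>.2 fun j => ?_
    have hσ1 : |σ j| = 1 := by rcases hσ j with h | h <;> simp [h]
    rw [Pi.sub_apply, Real.norm_eq_abs, ← one_mul |z j - a j|, ← hσ1, ← abs_mul, mul_sub, hσz,
      abs_sub_comm, abs_of_nonneg (sub_nonneg.2 (min_le_left _ _))]
    rcases min_cases (σ j * a j) (σ j * b j) with ⟨h, _⟩ | ⟨h, _⟩ <;> linarith [hle j, hle i]

variable [DecidableEq ι]

theorem sign_mul_apply_nonneg_of_metzler (hσ : ∀ j, σ j ≠ 0)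
    {A : (ι → ℝ) →L[ℝ] (ι → ℝ)} {i : ι}
    (hA : ∀ j, i ≠ j → 0 ≤ σ i * σ j * A (Pi.single j 1) i)
    {v : ι → ℝ} (hv : ∀ j, 0 ≤ σ j * v j) (hvi : v i = 0) :
    0 ≤ σ i * A v i := by
  have hA_v : A v i = ∑ j, v j * A (Pi.single j 1) i := by
    conv_lhs => rw [← Finset.univ_sum_single v]
    simp only [map_sum, Finset.sum_apply]
    refine Finset.sum_congr rfl fun j _ => ?_
    rw [← smul_eq_mul, ← Pi.smul_apply, ← map_smul, ← Pi.single_smul, smul_eq_mul, mul_one]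
  rw [hA_v, Finset.mul_sum]
  refine Finset.sum_nonneg fun j _ => ?_
  rcases eq_or_ne i j with rfl | hij
  · simp [hvi]
  · have : 0 ≤ σ j * σ j * (σ i * (v j * A (Pi.single j 1) i)) := by
      have := mul_nonneg (hv j) (hA j hij)
      linarith
    exact nonneg_of_mul_nonneg_right this (mul_self_pos.2 (hσ j))

theorem sign_mul_apply_le_of_kamke (hσ : ∀ j, σ j ≠ 0) {W : Set (ι → ℝ)}
    (hpconv : ∀ u ∈ W, ∀ v ∈ W, (∀ i, σ i * u i ≤ σ i * v i) →
        ∀ t ∈ Set.Icc (0 : ℝ) 1, (1 - t) • u + t • v ∈ W)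
    {F : (ι → ℝ) → ι → ℝ} {J : (ι → ℝ) → (ι → ℝ) →L[ℝ] (ι → ℝ)}
    (hF : ∀ x ∈ W, HasFDerivAt F (J x) x)
    (hKamke : ∀ x ∈ W, ∀ i j, i ≠ j → 0 ≤ σ i * σ j * (J x (Pi.single j 1) i))
    {u v : ι → ℝ} (hu : u ∈ W) (hv : v ∈ W) (huv : ∀ j, σ j * u j ≤ σ j * v j)
    {i : ι} (hi : u i = v i) :
    σ i * F u i ≤ σ i * F v i := by
  have hseg : segment ℝ u v ⊆ W := by
    rw [segment_eq_image]
    rintro _ ⟨t, ht, rfl⟩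
    exact hpconv u hu v hv huv t ht
  have hderiv : ∀ p ∈ W, HasFDerivAt (fun w => σ i * F w i)
      (σ i • (ContinuousLinearMap.proj i).comp (J p)) p := fun p hp =>
    ((ContinuousLinearMap.proj i).hasFDerivAt.comp p (hF p hp)).const_mul (σ i)
  obtain ⟨p, hp, hmvt⟩ := domain_mvt (fun p hp => (hderiv p (hseg hp)).hasFDerivWithinAt)
    (convex_segment u v) (left_mem_segment ℝ u v) (right_mem_segment ℝ u v)
  have := sign_mul_apply_nonneg_of_metzler hσ (hKamke p (hseg hp) i)
    (v := v - u) (fun j => by simpa [mul_sub] using huv j) (by simp [hi])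
  simp only [smul_apply, ContinuousLinearMap.comp_apply,
    ContinuousLinearMap.proj_apply, smul_eq_mul] at hmvt
  linarith

theorem sign_mul_apply_le_add_of_sign_le_add (hσ : ∀ j, σ j = 1 ∨ σ j = -1)
    {W : Set (ι → ℝ)}
    (hpconv : ∀ u ∈ W, ∀ v ∈ W, (∀ i, σ i * u i ≤ σ i * v i) →
        ∀ t ∈ Set.Icc (0 : ℝ) 1, (1 - t) • u + t • v ∈ W)
    {F : (ι → ℝ) → ι → ℝ} {J : (ι → ℝ) → (ι → ℝ) →L[ℝ] (ι → ℝ)}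
    (hF : ∀ x ∈ W, HasFDerivAt F (J x) x)
    (hKamke : ∀ x ∈ W, ∀ i j, i ≠ j → 0 ≤ σ i * σ j * (J x (Pi.single j 1) i))
    {a b : ι → ℝ} (hb : b ∈ W) {δ L e : ℝ} (hδ : closedBall a δ ⊆ W)
    (hLip : ∀ z ∈ closedBall a δ, ‖F z - F a‖ ≤ L * ‖z - a‖) (hL : 0 ≤ L) (he : e ≤ δ)
    (hle : ∀ j, σ j * a j ≤ σ j * b j + e) {i : ι} (hi : σ i * b i ≤ σ i * a i) :
    σ i * F a i ≤ σ i * F b i + L * e := by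
  obtain ⟨z, hzb, hzi, hza⟩ := exists_sign_le_of_sign_le_add hσ hle hi
  have hz : z ∈ closedBall a δ := by rw [mem_closedBall, dist_eq_norm]; linarith
  have hσ0 : ∀ j, σ j ≠ 0 := fun j => by rcases hσ j with h | h <;> simp [h]
  have hquasi := sign_mul_apply_le_of_kamke hσ0 hpconv hF hKamke (hδ hz) hb hzb hzi
  have hσ1 : |σ i| = 1 := by rcases hσ i with h | h <;> simp [h]
  have hFza : σ i * F a i - σ i * F z i ≤ L * e := calc
    σ i * F a i - σ i * F z i ≤ |σ i * (F z i - F a i)| := by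
        rw [mul_sub, abs_sub_comm]; exact le_abs_self _
    _ = ‖(F z - F a) i‖ := by rw [abs_mul, hσ1, one_mul, Real.norm_eq_abs, Pi.sub_apply]
    _ ≤ ‖F z - F a‖ := norm_le_pi_norm _ i
    _ ≤ L * ‖z - a‖ := hLip z hz
    _ ≤ L * e := mul_le_mul_of_nonneg_left hza hL
  linarith

open Real in
theorem sign_mul_solution_lt_add_of_kamke (hσ : ∀ j, σ j = 1 ∨ σ j = -1)
    {W : Set (ι → ℝ)}
    (hpconv : ∀ u ∈ W, ∀ v ∈ W, (∀ i, σ i * u i ≤ σ i * v i) →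
        ∀ t ∈ Set.Icc (0 : ℝ) 1, (1 - t) • u + t • v ∈ W)
    {F : (ι → ℝ) → ι → ℝ} {J : (ι → ℝ) → (ι → ℝ) →L[ℝ] (ι → ℝ)}
    (hF : ∀ x ∈ W, HasFDerivAt F (J x) x)
    (hKamke : ∀ x ∈ W, ∀ i j, i ≠ j → 0 ≤ σ i * σ j * (J x (Pi.single j 1) i))
    {T : ℝ} {x y : ℝ → ι → ℝ} (hyW : ∀ t ∈ Icc 0 T, y t ∈ W)
    (hx : ∀ t ∈ Icc 0 T, HasDerivWithinAt x (F (x t)) (Icc 0 T) t)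
    (hy : ∀ t ∈ Icc 0 T, HasDerivWithinAt y (F (y t)) (Icc 0 T) t)
    (h0 : ∀ i, σ i * x 0 i ≤ σ i * y 0 i) {δ L η : ℝ} (hL : 0 ≤ L)
    (hLip : ∀ t ∈ Icc 0 T, closedBall (x t) δ ⊆ W ∧
      ∀ z ∈ closedBall (x t) δ, ‖F z - F (x t)‖ ≤ L * ‖z - x t‖)
    (hη : 0 < η) (hηδ : η ≤ δ) :
    ∀ t ∈ Icc 0 T, ∀ i, σ i * x t i < σ i * y t i + η := by
  have hexp_le : ∀ t ∈ Icc 0 T, exp ((L + 1) * (t - T)) ≤ 1 := fun t ht =>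
    exp_le_one_iff.2 (mul_nonpos_of_nonneg_of_nonpos (by linarith) (sub_nonpos.2 ht.2))
  have hexp : ∀ t, HasDerivAt (fun t => η * exp ((L + 1) * (t - T)))
      (η * (exp ((L + 1) * (t - T)) * (L + 1))) t := fun t => by
    simpa using (((hasDerivAt_id t).sub_const T).const_mul (L + 1)).exp.const_mul η
  have hgap : ∀ t ∈ Icc 0 T, ∀ i,
      0 < σ i * y t i + η * exp ((L + 1) * (t - T)) - σ i * x t i := by
    refine forall_pos_of_hasDerivWithinAt_pos_of_eq_zero
      (φ' := fun i t => σ i * F (y t) i + η * (exp ((L + 1) * (t - T)) * (L + 1))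
        - σ i * F (x t) i) (fun i t ht => ?_) (fun i => ?_) fun t ht i hnonneg hzero => ?_
    · exact (((hasDerivWithinAt_pi.1 (hy t ht) i).const_mul (σ i)).add
        (hexp t).hasDerivWithinAt).sub ((hasDerivWithinAt_pi.1 (hx t ht) i).const_mul (σ i))
    · linarith [h0 i, mul_pos hη (exp_pos ((L + 1) * (0 - T)))]
    · have ht' := Ioc_subset_Icc_self ht
      set e := η * exp ((L + 1) * (t - T))
      have he : 0 < e := mul_pos hη (exp_pos _)
      have he_le : e ≤ δ := by
        simpa using mul_le_mul hηδ (hexp_le t ht') (exp_pos _).le (hη.le.trans hηδ)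
      obtain ⟨hball, hballLip⟩ := hLip t ht'
      have hest := sign_mul_apply_le_add_of_sign_le_add hσ hpconv hF hKamke (hyW t ht')
        (e := e) hball hballLip hL he_le (fun j => by linarith [hnonneg j]) (i := i)
        (by linarith)
      have : η * (exp ((L + 1) * (t - T)) * (L + 1)) = L * e + e := by ring
      linarith
  intro t ht i
  nlinarith [hgap t ht i, hexp_le t ht]

end Orthant

theorem kamke_implies_monotone_general (n : ℕ) (σ : Fin n → ℝ)
    (hσ : ∀ i, σ i = 1 ∨ σ i = -1)
    (W : Set (Fin n → ℝ)) (hWopen : IsOpen W)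
    (hpconv : ∀ u ∈ W, ∀ v ∈ W, (∀ i, σ i * u i ≤ σ i * v i) →
        ∀ t ∈ Set.Icc (0 : ℝ) 1, (1 - t) • u + t • v ∈ W)
    (F : (Fin n → ℝ) → Fin n → ℝ)
    (J : (Fin n → ℝ) → (Fin n → ℝ) →L[ℝ] (Fin n → ℝ))
    (hF : ∀ x ∈ W, HasFDerivAt F (J x) x)
    (hJcont : ContinuousOn J W)
    (hKamke : ∀ x ∈ W, ∀ i j, i ≠ j → 0 ≤ σ i * σ j * (J x (Pi.single j 1) i))
    (T : ℝ)
    (x y : ℝ → Fin n → ℝ)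
    (hxW : ∀ t ∈ Set.Icc 0 T, x t ∈ W)
    (hyW : ∀ t ∈ Set.Icc 0 T, y t ∈ W)
    (hx : ∀ t ∈ Set.Icc 0 T, HasDerivWithinAt x (F (x t)) (Set.Icc 0 T) t)
    (hy : ∀ t ∈ Set.Icc 0 T, HasDerivWithinAt y (F (y t)) (Set.Icc 0 T) t)
    (h0 : ∀ i, σ i * x 0 i ≤ σ i * y 0 i) :
    ∀ t ∈ Set.Icc 0 T, ∀ i, σ i * x t i ≤ σ i * y t i := by
  obtain ⟨δ, hδ, L, hL, hLip⟩ :=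
    (isCompact_Icc.image_of_continuousOn fun t ht => (hx t ht).continuousWithinAt
      ).exists_pos_norm_image_sub_le_on_closedBall hWopen
      (by rintro _ ⟨t, ht, rfl⟩; exact hxW t ht) hF hJcont
  intro t ht i
  refine le_of_forall_pos_lt_add fun ε hε => ?_
  exact (sign_mul_solution_lt_add_of_kamke hσ hpconv hF hKamke hyW hx hy h0 hL
    (fun t ht => hLip (x t) ⟨t, ht, rfl⟩) (lt_min hδ hε) (min_le_left _ _) t ht i).trans_le
    (by gcongr; exact min_le_right _ _)

/-- Kamke's condition implies monotonicity: if `W` is open and p-convex with respect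
to the orthant order `≤_σ`, and the Jacobian `J` of the `C¹` vector field `F`
satisfies `σ_i σ_j J_{ij}(x) ≥ 0` for all `i ≠ j` and `x ∈ W` (i.e. `Σ J(x) Σ` is
Metzler), then the flow of `ẋ = F(x)` is monotone with respect to `≤_σ`: ordered
initial conditions remain ordered. -/
theorem kamke_implies_monotone (n : ℕ) (σ : Fin n → ℝ)
    (hσ : ∀ i, σ i = 1 ∨ σ i = -1)
    (W : Set (Fin n → ℝ)) (hWopen : IsOpen W)
    (hpconv : ∀ u ∈ W, ∀ v ∈ W, (∀ i, σ i * u i ≤ σ i * v i) →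
        ∀ t ∈ Set.Icc (0 : ℝ) 1, (1 - t) • u + t • v ∈ W)
    (F : (Fin n → ℝ) → Fin n → ℝ)
    (J : (Fin n → ℝ) → (Fin n → ℝ) →L[ℝ] (Fin n → ℝ))
    (hF : ∀ x ∈ W, HasFDerivAt F (J x) x)
    (hJcont : ContinuousOn J W)
    (hKamke : ∀ x ∈ W, ∀ i j, i ≠ j → 0 ≤ σ i * σ j * (J x (Pi.single j 1) i))
    (T : ℝ) (hT : 0 ≤ T)
    (x y : ℝ → Fin n → ℝ)
    (hxW : ∀ t ∈ Set.Icc 0 T, x t ∈ W)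
    (hyW : ∀ t ∈ Set.Icc 0 T, y t ∈ W)
    (hx : ∀ t ∈ Set.Icc 0 T, HasDerivWithinAt x (F (x t)) (Set.Icc 0 T) t)
    (hy : ∀ t ∈ Set.Icc 0 T, HasDerivWithinAt y (F (y t)) (Set.Icc 0 T) t)
    (h0 : ∀ i, σ i * x 0 i ≤ σ i * y 0 i) :
    ∀ t ∈ Set.Icc 0 T, ∀ i, σ i * x t i ≤ σ i * y t i :=
  kamke_implies_monotone_general n σ hσ W hWopen hpconv F J hF hJcont hKamke T x y hxW hyW hx hy h0
end

section
/- (Positive Loop Property.) Let n ≥ 1 and let ε : {1,…,n} × {1,…,n} → {−1, 0, 1} encode the off-diagonal sign pattern of a sign-stable Jacobian (ε(i,j) is the sign of J_{ij} for i ≠ j). Form the undirected signed graph G on vertices {1,…,n} with an edge {i,j} (i ≠ j) whenever ε(i,j) ≠ 0 or ε(j,i) ≠ 0, and assign the edge the sign s(i,j) ∈ {−1,1} of a nonzero value among ε(i,j), ε(j,i). Assume every loop of G is positive, meaning: (a) for all i ≠ j, ε(i,j)·ε(j,i) ≥ 0 (so edge signs are well defined and every 2-cycle is positive), and (b) for every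 cycle v₀, v₁, …, v_k = v₀ of distinct vertices (k ≥ 3) with {v_{m}, v_{m+1}} an edge of G for each m, the product s(v₀,v₁)·s(v₁,v₂)⋯s(v_{k−1},v_k) equals +1. Then there exists σ ∈ {−1,1}ⁿ such that σ_i σ_j ε(i,j) ≥ 0 for all i ≠ j. -/
/-!
Sign each edge of the graph and call the product of the signs along a walk its gain. A closed
walk that is not a cycle either runs once back and forth along an edge, or splits at a repeated
vertex into two shorter closed walks; so if every cycle has gain `1`, every closed walk does.
Then the gain of a walk depends only on its endpoints, and `σ i`, the gain of a walk from a
fixed root of the component of `i` to `i`, satisfies `σ j = σ i * ε i j` whenever `ε i j ≠ 0`.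
-/

namespace SimpleGraph

variable {V M : Type*} [CommMonoid M] {G : SimpleGraph V}

namespace Walk

lemma exists_eq_append_append_of_two_le_count [DecidableEq V] {u v x : V} (p : G.Walk u v)
    (hx : 2 ≤ p.support.count x) :
    ∃ (p₁ : G.Walk u x) (p₂ : G.Walk x x) (p₃ : G.Walk x v),
      ¬p₂.Nil ∧ p = p₁.append (p₂.append p₃) := by
  have hmem : x ∈ p.support := List.count_pos_iff.mp (by omega)
  obtain ⟨p₁, r, rfl, hcount⟩ : ∃ (p₁ : G.Walk u x) (r : G.Walk x v),
      p = p₁.append r ∧ p₁.support.count x = 1 :=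
    ⟨_, _, (p.take_spec hmem).symm, p.count_support_takeUntil_eq_one hmem⟩
  rw [support_append, List.count_append, hcount] at hx
  cases r with
  | nil => simp at hx
  | cons h r =>
    have hxr : x ∈ r.support :=
      List.count_pos_iff.mp (by simp only [support_cons, List.tail_cons] at hx; omega)
    refine ⟨p₁, cons h (r.takeUntil x hxr), r.dropUntil x hxr, not_nil_cons, ?_⟩
    rw [cons_append, take_spec]

variable (s : V → V → M)

def gain {u v : V} (p : G.Walk u v) : M := (p.darts.map fun d => s d.fst d.snd).prod

@[simp] lemma gain_nil {u : V} : (nil : G.Walk u u).gain s = 1 := rfl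

@[simp] lemma gain_cons {u v w : V} (h : G.Adj u v) (p : G.Walk v w) :
    (cons h p).gain s = s u v * p.gain s := by
  simp [gain]

@[simp] lemma gain_append {u v w : V} (p : G.Walk u v) (q : G.Walk v w) :
    (p.append q).gain s = p.gain s * q.gain s := by
  simp [gain]

@[simp] lemma gain_concat {u v w : V} (p : G.Walk u v) (h : G.Adj v w) :
    (p.concat h).gain s = p.gain s * s v w := by
  simp [concat_eq_append]

@[simp] lemma gain_copy {u v u' v' : V} (p : G.Walk u v) (hu : u = u') (hv : v = v') :
    (p.copy hu hv).gain s = p.gain s := by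
  subst hu hv; rfl

lemma gain_eq_prod_range {u v : V} (p : G.Walk u v) :
    p.gain s = ∏ m ∈ Finset.range p.length, s (p.getVert m) (p.getVert (m + 1)) := by
  induction p with
  | nil => rfl
  | cons h p ih => simp [Finset.prod_range_succ', ih, mul_comm]

lemma gain_mul_self (hs : ∀ u v, G.Adj u v → s u v * s u v = 1) {u v : V} (p : G.Walk u v) :
    p.gain s * p.gain s = 1 := by
  induction p with
  | nil => simp
  | cons h p ih => rw [gain_cons, mul_mul_mul_comm, hs _ _ h, ih, one_mul]

variable {s}

lemma gain_mul_gain_reverse (hs : ∀ u v, G.Adj u v → s u v * s v u = 1) {u v : V}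
    (p : G.Walk u v) : p.gain s * p.reverse.gain s = 1 := by
  induction p with
  | nil => simp
  | @cons a b _ h p ih =>
    calc (cons h p).gain s * (cons h p).reverse.gain s
        = (s a b * s b a) * (p.gain s * p.reverse.gain s) := by
          simp only [reverse_cons, gain_append, gain_cons, gain_nil, mul_one]; ac_rfl
      _ = 1 := by rw [hs _ _ h, ih, one_mul]

theorem gain_eq_one_of_forall_isCycle (hs : ∀ u v, G.Adj u v → s u v * s v u = 1)
    (hcyc : ∀ u (c : G.Walk u u), c.IsCycle → c.gain s = 1) {u : V} (c : G.Walk u u) :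
    c.gain s = 1 := by
  classical
  induction hlen : c.length using Nat.strong_induction_on generalizing u with
  | _ N ih =>
  cases c with
  | nil => rfl
  | cons h p =>
    by_cases hp : p.IsPath
    · cases p with
      | nil => exact absurd h G.irrefl
      | cons h' q =>
        cases q with
        | nil => simp [hs _ _ h]
        | cons h'' q =>
          exact hcyc _ _
            (isCycle_iff_isPath_tail_and_le_length.mpr ⟨by simpa using hp, by simp⟩)
    · obtain ⟨x, hx⟩ : ∃ x, 2 ≤ p.support.count x := by
        by_contra! hcount
        exact hp (IsPath.mk' (List.nodup_iff_count_le_one.mpr fun x => by grind))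
      obtain ⟨p₁, p₂, p₃, hp₂, rfl⟩ := p.exists_eq_append_append_of_two_le_count hx
      have hlen₂ : 0 < p₂.length := not_nil_iff_lt_length.mp hp₂
      simp only [length_cons, length_append] at hlen
      have hloop : p₂.gain s = 1 := ih _ (by omega) p₂ rfl
      have hrest : (cons h (p₁.append p₃)).gain s = 1 :=
        ih _ (by simp only [length_cons, length_append]; omega) _ rfl
      calc (cons h (p₁.append (p₂.append p₃))).gain s
          = p₂.gain s * (cons h (p₁.append p₃)).gain s := by
            simp only [gain_cons, gain_append]; ac_rfl
        _ = 1 := by rw [hloop, hrest, one_mul]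

lemma gain_eq_gain_of_forall_closed (hs : ∀ u v, G.Adj u v → s u v * s v u = 1)
    (hclosed : ∀ u (c : G.Walk u u), c.gain s = 1) {u v : V} (p q : G.Walk u v) :
    p.gain s = q.gain s :=
  left_inv_eq_right_inv (by simpa using hclosed _ (p.append q.reverse))
    (by rw [mul_comm]; exact gain_mul_gain_reverse hs q)

end Walk

noncomputable def gainPotential (G : SimpleGraph V) (s : V → V → M) (u : V) : M :=
  (ConnectedComponent.exact (G.connectedComponentMk u).out_eq).some.gain s

lemma gainPotential_mul_self {s : V → V → M} (hs : ∀ u v, G.Adj u v → s u v * s u v = 1)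
    (u : V) : G.gainPotential s u * G.gainPotential s u = 1 :=
  Walk.gain_mul_self s hs _

lemma gainPotential_adj {s : V → V → M} (hs : ∀ u v, G.Adj u v → s u v * s v u = 1)
    (hclosed : ∀ u (c : G.Walk u u), c.gain s = 1) {u v : V} (h : G.Adj u v) :
    G.gainPotential s v = G.gainPotential s u * s u v := by
  have hroot : (G.connectedComponentMk u).out = (G.connectedComponentMk v).out :=
    congrArg _ (ConnectedComponent.sound h.reachable)
  rw [gainPotential, gainPotential, Walk.gain_eq_gain_of_forall_closed hs hclosed _
    (((ConnectedComponent.exact (G.connectedComponentMk u).out_eq).some.concat h).copy hroot rfl),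
    Walk.gain_copy, Walk.gain_concat]

end SimpleGraph

open SimpleGraph

section SignPattern

variable {V : Type*}

def edgeSign (ε : V → V → ℤ) (i j : V) : ℤ := if ε i j ≠ 0 then ε i j else ε j i

variable {ε : V → V → ℤ}

lemma edgeSign_comm (hval : ∀ i j, ε i j = -1 ∨ ε i j = 0 ∨ ε i j = 1)
    (h2cycle : ∀ i j, i ≠ j → 0 ≤ ε i j * ε j i) {i j : V} (hij : i ≠ j) :
    edgeSign ε i j = edgeSign ε j i := by
  have := h2cycle i j hij
  rcases hval i j with h | h | h <;> rcases hval j i with h' | h' | h' <;>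
    simp_all [edgeSign]

lemma edgeSign_mul_self (hval : ∀ i j, ε i j = -1 ∨ ε i j = 0 ∨ ε i j = 1) {i j : V}
    (h : ε i j ≠ 0 ∨ ε j i ≠ 0) : edgeSign ε i j * edgeSign ε i j = 1 := by
  rcases hval i j with h₁ | h₁ | h₁ <;> rcases hval j i with h₂ | h₂ | h₂ <;>
    simp_all [edgeSign]

lemma gain_edgeSign_eq_one_of_isCycle
    (hcycle : ∀ k : ℕ, 3 ≤ k → ∀ v : ℕ → V,
        (∀ a < k, ∀ b < k, v a = v b → a = b) →
        v k = v 0 →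
        (∀ m < k, ε (v m) (v (m + 1)) ≠ 0 ∨ ε (v (m + 1)) (v m) ≠ 0) →
        (∏ m ∈ Finset.range k,
          (if ε (v m) (v (m + 1)) ≠ 0 then ε (v m) (v (m + 1))
           else ε (v (m + 1)) (v m))) = 1)
    {u : V} (c : (fromRel fun i j => ε i j ≠ 0).Walk u u) (hc : c.IsCycle) :
    c.gain (edgeSign ε) = 1 := by
  rw [Walk.gain_eq_prod_range]
  refine hcycle c.length hc.three_le_length c.getVert
    (fun a ha b hb hab => hc.getVert_injOn' (by simp; omega) (by simp; omega) hab)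
    (by simp) (fun m hm => ((fromRel_adj _ _ _).mp (c.adj_getVert_succ hm)).2)

end SignPattern

theorem positive_loop_property_general (n : ℕ) (ε : Fin n → Fin n → ℤ)
    (hval : ∀ i j, ε i j = -1 ∨ ε i j = 0 ∨ ε i j = 1)
    (h2cycle : ∀ i j, i ≠ j → 0 ≤ ε i j * ε j i)
    (hcycle : ∀ k : ℕ, 3 ≤ k → ∀ v : ℕ → Fin n,
        (∀ a < k, ∀ b < k, v a = v b → a = b) →   -- the vertices are distinct
        v k = v 0 →                                -- the walk is closed
        (∀ m < k, ε (v m) (v (m + 1)) ≠ 0 ∨ ε (v (m + 1)) (v m) ≠ 0) → -- edges exist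
        (∏ m ∈ Finset.range k,
          (if ε (v m) (v (m + 1)) ≠ 0 then ε (v m) (v (m + 1))
           else ε (v (m + 1)) (v m))) = 1) :
    ∃ σ : Fin n → ℤ, (∀ i, σ i = 1 ∨ σ i = -1) ∧
      ∀ i j, i ≠ j → 0 ≤ σ i * σ j * ε i j := by
  set G := fromRel fun i j : Fin n => ε i j ≠ 0
  have hsq : ∀ i j, G.Adj i j → edgeSign ε i j * edgeSign ε i j = 1 :=
    fun i j h => edgeSign_mul_self hval ((fromRel_adj _ _ _).mp h).2
  have hinv : ∀ i j, G.Adj i j → edgeSign ε i j * edgeSign ε j i = 1 := fun i j h => by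
    rw [← edgeSign_comm hval h2cycle h.ne, hsq i j h]
  have hclosed : ∀ u (c : G.Walk u u), c.gain (edgeSign ε) = 1 :=
    fun u => Walk.gain_eq_one_of_forall_isCycle hinv
      (fun _ c hc => gain_edgeSign_eq_one_of_isCycle hcycle c hc)
  refine ⟨G.gainPotential (edgeSign ε), fun i => mul_self_eq_one_iff.mp
    (gainPotential_mul_self hsq i), fun i j hij => ?_⟩
  by_cases hz : ε i j = 0
  · simp [hz]
  have h : G.Adj i j := (fromRel_adj _ _ _).mpr ⟨hij, Or.inl hz⟩
  have hsign : edgeSign ε i j = ε i j := if_pos hz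
  rw [gainPotential_adj hinv hclosed h, hsign]
  calc (0 : ℤ) ≤ (G.gainPotential (edgeSign ε) i * ε i j) ^ 2 := sq_nonneg _
    _ = _ := by ring

/-- Positive Loop Property: let `ε` encode the off-diagonal sign pattern of a
sign-stable Jacobian. Form the undirected signed graph with an edge `{i,j}` whenever
`ε i j ≠ 0` or `ε j i ≠ 0`, signed by a nonzero value among `ε i j`, `ε j i`.
If every 2-cycle is positive (`ε i j · ε j i ≥ 0`) and every cycle of length `≥ 3`
has positive sign-product, then there exists `σ ∈ {−1,1}ⁿ` such that
`σ_i σ_j ε i j ≥ 0` for all `i ≠ j`, i.e. `Σ J Σ` is Metzler. -/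
theorem positive_loop_property (n : ℕ) (hn : 1 ≤ n) (ε : Fin n → Fin n → ℤ)
    (hval : ∀ i j, ε i j = -1 ∨ ε i j = 0 ∨ ε i j = 1)
    (h2cycle : ∀ i j, i ≠ j → 0 ≤ ε i j * ε j i)
    (hcycle : ∀ k : ℕ, 3 ≤ k → ∀ v : ℕ → Fin n,
        (∀ a < k, ∀ b < k, v a = v b → a = b) →   -- the vertices are distinct
        v k = v 0 →                                -- the walk is closed
        (∀ m < k, ε (v m) (v (m + 1)) ≠ 0 ∨ ε (v (m + 1)) (v m) ≠ 0) → -- edges exist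
        (∏ m ∈ Finset.range k,
          (if ε (v m) (v (m + 1)) ≠ 0 then ε (v m) (v (m + 1))
           else ε (v (m + 1)) (v m))) = 1) :
    ∃ σ : Fin n → ℤ, (∀ i, σ i = 1 ∨ σ i = -1) ∧
      ∀ i j, i ≠ j → 0 ≤ σ i * σ j * ε i j :=
  positive_loop_property_general n ε hval h2cycle hcycle
end

section
/- (Proposition 1.) Let W ⊆ ℝⁿ be open, let σ ∈ {−1,1}ⁿ with orthant cone C_σ = {u ∈ ℝⁿ : σ_i u_i ≥ 0 for all i}, and let F : W → ℝⁿ be continuously differentiable. Let φ : [0,∞) × W → W be a flow for ẋ = F(x), i.e., φ(0,z) = z, ∂φ/∂t (t,z) = F(φ(t,z)), and z ↦ φ(t,z) is continuously differentiable for each t. Assume the flow is monotone with respect to C_σ (z₁ ≤_σ z₂ implies φ(t,z₁) ≤_σ φ(t,z₂) for all t ≥ 0), and that the Jacobian ∂F/∂x(z) is an irreducible matrix for every z ∈ W. Then the flow has positive derivatives: for every t > 0, z ∈ W, and every nonzero v ∈ C_σ, the derivative D_z φ(t, z) applied to v lies in the interior of C_σ (i.e., σ_i (D_z φ(t,z)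 v)_i > 0 for all i). -/
/-!
Monotonicity of the flow forces the vector field to be cooperative: differentiating the
order-preserving property of `φ` at `t = 0` gives `σᵢ σⱼ ∂Fᵢ/∂xⱼ ≥ 0` for `i ≠ j`. For a direction
`v ≥_σ 0` and small `s > 0`, the σ-gaps `uₖ(t) = σₖ (φ(t, z + s v) - φ(t, z))ₖ` are nonnegative and,
by the mean value theorem along segments, satisfy `uᵢ' ≥ -L uᵢ + ∑_{k ≠ i} σᵢ σₖ ∂Fᵢ/∂xₖ · uₖ`
inside a tube around the trajectory of `z` on which `‖DF‖ ≤ L`. Hence `e^{L t} uᵢ(t)` is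
nondecreasing, and where `σᵢ σⱼ ∂Fᵢ/∂xⱼ ≥ δ > 0` the component `j` feeds the component `i`. Dividing
by `s` and letting `s → 0⁺` transfers both facts to `wₖ(t) = σₖ (D_z φ(t, z) v)ₖ`; only limits at
fixed times are taken, as nothing is known about `D_z φ` as a function of `t`.

If some `wᵢ(T)` vanished, the set `S` of components that never become positive on `[0, T)` would be
nonempty, and proper because `w(0) = σ v ≠ 0`. At a late enough time `t < T` every component outside
`S` is positive, and irreducibility of the Jacobian at `φ(t, z)` couples one of them into `S`, which
makes a component of `S` positive before `T`.
-/

open Set Filter Topology Metric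

theorem hasDerivAt_add_smul {E : Type*} [NormedAddCommGroup E] [NormedSpace ℝ E] (z v : E)
    (s : ℝ) : HasDerivAt (fun s : ℝ => z + s • v) v s :=
  (((hasDerivAt_id s).smul_const v).const_add z).congr_deriv (one_smul ℝ v)

theorem tendsto_add_smul_nhdsGT {E : Type*} [NormedAddCommGroup E] [NormedSpace ℝ E] (z v : E) :
    Tendsto (fun s : ℝ => z + s • v) (𝓝[>] 0) (𝓝 z) := by
  have h := (hasDerivAt_add_smul z v 0).continuousAt.tendsto
  rw [zero_smul, add_zero] at h
  exact h.mono_left nhdsWithin_le_nhds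

theorem HasDerivWithinAt.nonneg_of_eventually_le {f : ℝ → ℝ} {f' a : ℝ}
    (hf : HasDerivWithinAt f f' (Ici a) a) (h : ∀ᶠ x in 𝓝[>] a, f a ≤ f x) : 0 ≤ f' := by
  refine ge_of_tendsto ((hasDerivWithinAt_iff_tendsto_slope' self_notMem_Ioi).1 hf.Ioi_of_Ici) ?_
  filter_upwards [h, self_mem_nhdsWithin] with x hx (hax : a < x)
  rw [slope_def_field]
  exact div_nonneg (sub_nonneg.2 hx) (sub_pos.2 hax).le

theorem exp_mul_add_le_of_le_deriv {u u' : ℝ → ℝ} {a b L m : ℝ} (hab : a ≤ b)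
    (hu : ContinuousOn u (Icc a b)) (hu' : ∀ x ∈ Ioo a b, HasDerivAt u (u' x) x)
    (hm : ∀ x ∈ Ioo a b, m ≤ Real.exp (L * x) * (u' x + L * u x)) :
    Real.exp (L * a) * u a + m * (b - a) ≤ Real.exp (L * b) * u b := by
  have hexp : ∀ x, HasDerivAt (fun x => Real.exp (L * x)) (Real.exp (L * x) * L) x := fun x => by
    simpa using ((hasDerivAt_id x).const_mul L).exp
  have hG : MonotoneOn (fun x => Real.exp (L * x) * u x - m * x) (Icc a b) := by
    refine monotoneOn_of_hasDerivWithinAt_nonneg (convex_Icc a b)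
      (f' := fun x => Real.exp (L * x) * L * u x + Real.exp (L * x) * u' x - m) ?_ ?_ ?_
    · exact ((Real.continuous_exp.comp (continuous_const_mul L)).continuousOn.mul hu).sub
        (continuous_const_mul m).continuousOn
    · rw [interior_Icc]
      intro x hx
      exact (((hexp x).mul (hu' x hx)).sub ((hasDerivAt_id x).const_mul m |>.congr_deriv
        (mul_one m))).hasDerivWithinAt
    · rw [interior_Icc]
      intro x hx
      linarith [hm x hx]
  have := hG (left_mem_Icc.2 hab) (right_mem_Icc.2 hab) hab
  simp only at this
  linarith

theorem IsCompact.exists_closedBall_subset_norm_le {E G : Type*} [NormedAddCommGroup E]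
    [ProperSpace E] [NormedAddCommGroup G] {K W : Set E} {J : E → G} (hK : IsCompact K)
    (hW : IsOpen W) (hKW : K ⊆ W) (hJ : ContinuousOn J W) :
    ∃ ε > 0, ∃ L, ∀ p ∈ K, closedBall p ε ⊆ W ∧ ∀ y ∈ closedBall p ε, ‖J y‖ ≤ L := by
  obtain ⟨ε, hε, hεW⟩ := hK.exists_cthickening_subset_open hW hKW
  obtain ⟨L, hL⟩ := hK.cthickening.exists_bound_of_continuousOn (hJ.mono hεW)
  exact ⟨ε, hε, L, fun p hp => ⟨(closedBall_subset_cthickening hp ε).trans hεW,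
    fun y hy => hL y (closedBall_subset_cthickening hp ε hy)⟩⟩

/-- The fencing argument needs the Lipschitz bound only when `‖g t - f t‖` touches the barrier
`r e^{K t} ≤ ε`, so `g` need not be known in advance to stay near `f`; the slack `L < K` makes the
barrier strict. -/
theorem norm_sub_le_mul_exp_of_lipschitz_near {E : Type*} [NormedAddCommGroup E]
    [NormedSpace ℝ E] {F : E → E} {f g : ℝ → E} {T L K ε r : ℝ}
    (hf : ContinuousOn f (Icc 0 T)) (hf' : ∀ t ∈ Ico 0 T, HasDerivWithinAt f (F (f t)) (Ici t) t)
    (hg : ContinuousOn g (Icc 0 T)) (hg' : ∀ t ∈ Ico 0 T, HasDerivWithinAt g (F (g t)) (Ici t) t)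
    (hlip : ∀ t ∈ Ico 0 T, ∀ x ∈ closedBall (f t) ε, ‖F x - F (f t)‖ ≤ L * ‖x - f t‖)
    (hK : 0 ≤ K) (hLK : L < K) (hr : 0 < r) (h0 : ‖g 0 - f 0‖ ≤ r)
    (hrε : r * Real.exp (K * T) ≤ ε) :
    ∀ t ∈ Icc 0 T, ‖g t - f t‖ ≤ r * Real.exp (K * t) := by
  refine image_norm_le_of_norm_deriv_right_lt_deriv_boundary (hg.sub hf)
    (fun t ht => (hg' t ht).sub (hf' t ht)) (by simpa using h0)
    (B' := fun t => r * (Real.exp (K * t) * K))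
    (fun t => by simpa using (((hasDerivAt_id t).const_mul K).exp.const_mul r)) ?_
  intro t ht heq
  rw [Pi.sub_apply] at heq
  have hB : 0 < r * Real.exp (K * t) := mul_pos hr (Real.exp_pos _)
  have hclose : g t ∈ closedBall (f t) ε := by
    rw [mem_closedBall, dist_eq_norm, heq]
    exact hrε.trans' (mul_le_mul_of_nonneg_left
      (Real.exp_le_exp.2 (mul_le_mul_of_nonneg_left ht.2.le hK)) hr.le)
  calc ‖F (g t) - F (f t)‖ ≤ L * ‖g t - f t‖ := hlip t ht _ hclose
    _ = L * (r * Real.exp (K * t)) := by rw [heq]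
    _ < K * (r * Real.exp (K * t)) := mul_lt_mul_of_pos_right hLK hB
    _ = r * (Real.exp (K * t) * K) := by ring

section OrthantOrder

variable {ι : Type*} {σ : ι → ℝ}

def OrthantLE (σ a b : ι → ℝ) : Prop := ∀ k, σ k * a k ≤ σ k * b k

def orthantGap (σ a b : ι → ℝ) (k : ι) : ℝ := σ k * (b k - a k)

theorem orthantGap_nonneg {a b : ι → ℝ} (h : OrthantLE σ a b) (k : ι) :
    0 ≤ orthantGap σ a b k := by
  simpa [orthantGap, mul_sub] using h k

theorem orthantLE_add_smul {a v : ι → ℝ} (hv : OrthantLE σ 0 v) {s : ℝ} (hs : 0 ≤ s) :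
    OrthantLE σ a (a + s • v) := fun k => by
  have := mul_nonneg hs (by simpa using hv k)
  simp only [Pi.add_apply, Pi.smul_apply, smul_eq_mul]
  linarith [mul_left_comm s (σ k) (v k)]

theorem OrthantLE.exists_pos_of_ne_zero {v : ι → ℝ} (hv : OrthantLE σ 0 v) (hσ : ∀ k, σ k ≠ 0)
    (hv0 : v ≠ 0) : ∃ k, 0 < σ k * v k := by
  obtain ⟨k, hk⟩ := Function.ne_iff.1 hv0
  exact ⟨k, (by simpa using hv k : 0 ≤ σ k * v k).lt_of_ne (mul_ne_zero (hσ k) hk).symm⟩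

theorem HasDerivWithinAt.orthantGap {a b : ℝ → ι → ℝ} {a' b' : ι → ℝ} {s : Set ℝ} {t : ℝ}
    (ha : HasDerivWithinAt a a' s t) (hb : HasDerivWithinAt b b' s t) (k : ι) :
    HasDerivWithinAt (fun τ => orthantGap σ (a τ) (b τ) k) (orthantGap σ a' b' k) s t :=
  ((hasDerivWithinAt_pi.1 hb k).sub (hasDerivWithinAt_pi.1 ha k)).const_mul (σ k)

theorem HasFDerivAt.tendsto_inv_mul_orthantGap [Fintype ι] {f : (ι → ℝ) → ι → ℝ}
    {D : (ι → ℝ) →L[ℝ] ι → ℝ} {z : ι → ℝ} (hf : HasFDerivAt f D z) (v : ι → ℝ) (k : ι) :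
    Tendsto (fun s : ℝ => s⁻¹ * orthantGap σ (f z) (f (z + s • v)) k) (𝓝[>] 0)
      (𝓝 (σ k * D v k)) := by
  have hline : HasDerivAt (fun s : ℝ => f (z + s • v)) (D v) 0 :=
    hf.comp_hasDerivAt_of_eq 0 (hasDerivAt_add_smul z v 0) (by simp)
  refine ((((continuous_apply k).tendsto _).comp hline.tendsto_slope_zero_right).const_mul
    (σ k)).congr fun s => ?_
  simp [orthantGap]
  ring

variable [DecidableEq ι]

def IsCooperativeOn (σ : ι → ℝ) (U : Set (ι → ℝ)) (J : (ι → ℝ) → (ι → ℝ) →L[ℝ] ι → ℝ) :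
    Prop :=
  ∀ y ∈ U, ∀ i k, i ≠ k → 0 ≤ σ i * σ k * J y (Pi.single k 1) i

theorem IsCooperativeOn.mono {U V : Set (ι → ℝ)} {J : (ι → ℝ) → (ι → ℝ) →L[ℝ] ι → ℝ}
    (h : IsCooperativeOn σ U J) (hVU : V ⊆ U) : IsCooperativeOn σ V J := fun y hy => h y (hVU hy)

variable [Fintype ι]

theorem abs_apply_single_le_opNorm (A : (ι → ℝ) →L[ℝ] ι → ℝ) (i k : ι) :
    |A (Pi.single k 1) i| ≤ ‖A‖ := by
  simpa [Pi.norm_single] using (norm_le_pi_norm (A (Pi.single k 1)) i).trans (A.le_opNorm _)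

theorem mul_apply_sub_eq_sum (hσ : ∀ k, σ k * σ k = 1) (A : (ι → ℝ) →L[ℝ] ι → ℝ)
    (a b : ι → ℝ) (i : ι) :
    σ i * A (b - a) i = ∑ k, σ i * σ k * A (Pi.single k 1) i * orthantGap σ a b k := by
  rw [← ContinuousLinearMap.coe_coe, ← LinearMap.toMatrix'_mulVec, Matrix.mulVec, dotProduct,
    Finset.mul_sum]
  refine Finset.sum_congr rfl fun k _ => ?_
  rw [LinearMap.toMatrix'_apply, orthantGap, ContinuousLinearMap.coe_coe, Pi.sub_apply]
  linear_combination (-(σ i * A (Pi.single k 1) i * (b k - a k))) * hσ k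

theorem sum_mul_orthantGap_le_of_segment {F : (ι → ℝ) → ι → ℝ}
    {J : (ι → ℝ) → (ι → ℝ) →L[ℝ] ι → ℝ} {a b c : ι → ℝ} {i : ι} (hσ : ∀ k, σ k * σ k = 1)
    (hF : ∀ y ∈ segment ℝ a b, HasFDerivAt F (J y) y)
    (hc : ∀ y ∈ segment ℝ a b, ∀ k, c k ≤ σ i * σ k * J y (Pi.single k 1) i)
    (hab : OrthantLE σ a b) :
    ∑ k, c k * orthantGap σ a b k ≤ orthantGap σ (F a) (F b) i := by
  set ℓ : ℝ → ι → ℝ := fun θ => a + θ • (b - a)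
  have hℓ : ∀ θ ∈ Icc (0 : ℝ) 1, ℓ θ ∈ segment ℝ a b := fun θ hθ => by
    rw [segment_eq_image']; exact ⟨θ, hθ, rfl⟩
  have hderiv : ∀ θ ∈ Icc (0 : ℝ) 1, HasDerivAt (fun θ => σ i * F (ℓ θ) i)
      (σ i * J (ℓ θ) (b - a) i) θ := fun θ hθ =>
    (hasDerivAt_pi.1 ((hF _ (hℓ θ hθ)).comp_hasDerivAt θ (hasDerivAt_add_smul a (b - a) θ))
      i).const_mul (σ i)
  obtain ⟨θ, hθ, hslope⟩ := exists_hasDerivAt_eq_slope _ _ zero_lt_one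
    (fun θ hθ => (hderiv θ hθ).continuousAt.continuousWithinAt)
    (fun θ hθ => hderiv θ (Ioo_subset_Icc_self hθ))
  have hends : σ i * F (ℓ 1) i - σ i * F (ℓ 0) i = orthantGap σ (F a) (F b) i := by
    simp [ℓ, orthantGap, mul_sub]
  rw [sub_zero, div_one, hends, mul_apply_sub_eq_sum hσ] at hslope
  rw [← hslope]
  exact Finset.sum_le_sum fun k _ => mul_le_mul_of_nonneg_right
    (hc _ (hℓ θ (Ioo_subset_Icc_self hθ)) k) (orthantGap_nonneg hab k)

namespace IsCooperativeOn

variable {U : Set (ι → ℝ)} {F : (ι → ℝ) → ι → ℝ} {J : (ι → ℝ) → (ι → ℝ) →L[ℝ] ι → ℝ}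
  {a b : ι → ℝ} {L : ℝ} {i : ι}

theorem neg_mul_orthantGap_le (hcoop : IsCooperativeOn σ U J) (hσ : ∀ k, σ k * σ k = 1)
    (hF : ∀ y ∈ U, HasFDerivAt F (J y) y) (hU : Convex ℝ U) (hJ : ∀ y ∈ U, ‖J y‖ ≤ L)
    (ha : a ∈ U) (hb : b ∈ U) (hab : OrthantLE σ a b) :
    -L * orthantGap σ a b i ≤ orthantGap σ (F a) (F b) i := by
  have hseg := hU.segment_subset ha hb
  convert sum_mul_orthantGap_le_of_segment (c := Pi.single i (-L)) hσ
    (fun y hy => hF y (hseg hy)) (fun y hy k => ?_) hab using 1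
  · simp [Pi.single_apply]
  rcases eq_or_ne k i with rfl | hki
  · have := abs_le.1 ((abs_apply_single_le_opNorm (J y) k k).trans (hJ y (hseg hy)))
    simp only [Pi.single_eq_same, hσ k, one_mul]
    linarith
  · simpa [Pi.single_eq_of_ne hki] using hcoop y (hseg hy) i k hki.symm

theorem neg_mul_orthantGap_add_le (hcoop : IsCooperativeOn σ U J) (hσ : ∀ k, σ k * σ k = 1)
    (hF : ∀ y ∈ U, HasFDerivAt F (J y) y) (hU : Convex ℝ U) (hJ : ∀ y ∈ U, ‖J y‖ ≤ L)
    {j : ι} {δ : ℝ} (hij : i ≠ j) (hδ : ∀ y ∈ U, δ ≤ σ i * σ j * J y (Pi.single j 1) i)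
    (ha : a ∈ U) (hb : b ∈ U) (hab : OrthantLE σ a b) :
    -L * orthantGap σ a b i + δ * orthantGap σ a b j ≤ orthantGap σ (F a) (F b) i := by
  have hseg := hU.segment_subset ha hb
  convert sum_mul_orthantGap_le_of_segment (c := Pi.single i (-L) + Pi.single j δ) hσ
    (fun y hy => hF y (hseg hy)) (fun y hy k => ?_) hab using 1
  · simp [Pi.single_apply, add_mul, Finset.sum_add_distrib]
  rcases eq_or_ne k i with rfl | hki
  · have := abs_le.1 ((abs_apply_single_le_opNorm (J y) k k).trans (hJ y (hseg hy)))
    simp only [Pi.add_apply, Pi.single_eq_same, Pi.single_eq_of_ne hij, hσ k, one_mul]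
    linarith
  rcases eq_or_ne k j with rfl | hkj
  · simpa [Pi.single_eq_of_ne hki] using hδ y (hseg hy)
  · simpa [Pi.single_eq_of_ne hki, Pi.single_eq_of_ne hkj] using
      hcoop y (hseg hy) i k hki.symm

end IsCooperativeOn

end OrthantOrder

structure IsSemiflowOn {E : Type*} [NormedAddCommGroup E] [NormedSpace ℝ E] (W : Set E)
    (F : E → E) (φ : ℝ → E → E) : Prop where
  mapsTo : ∀ t ∈ Ici (0 : ℝ), ∀ z ∈ W, φ t z ∈ W
  map_zero : ∀ z ∈ W, φ 0 z = z
  hasDerivWithinAt : ∀ z ∈ W, ∀ t ∈ Ici (0 : ℝ),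
    HasDerivWithinAt (fun τ => φ τ z) (F (φ t z)) (Ici 0) t

namespace IsSemiflowOn

section NormedSpace

variable {E : Type*} [NormedAddCommGroup E] [NormedSpace ℝ E] {W : Set E} {F : E → E}
  {φ : ℝ → E → E} {z : E}

theorem continuousOn (hφ : IsSemiflowOn W F φ) (hz : z ∈ W) :
    ContinuousOn (fun t => φ t z) (Ici 0) := fun t ht =>
  (hφ.hasDerivWithinAt z hz t ht).continuousWithinAt

theorem hasDerivWithinAt_Ici (hφ : IsSemiflowOn W F φ) (hz : z ∈ W) {t : ℝ} (ht : 0 ≤ t) :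
    HasDerivWithinAt (fun τ => φ τ z) (F (φ t z)) (Ici t) t :=
  (hφ.hasDerivWithinAt z hz t ht).mono (Ici_subset_Ici.2 ht)

theorem hasDerivAt (hφ : IsSemiflowOn W F φ) (hz : z ∈ W) {t : ℝ} (ht : 0 < t) :
    HasDerivAt (fun τ => φ τ z) (F (φ t z)) t :=
  (hφ.hasDerivWithinAt z hz t ht.le).hasDerivAt (Ici_mem_nhds ht)

theorem hasFDerivAt_zero (hφ : IsSemiflowOn W F φ) (hW : IsOpen W) (hz : z ∈ W) :
    HasFDerivAt (φ 0) (ContinuousLinearMap.id ℝ E) z :=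
  (hasFDerivAt_id z).congr_of_eventuallyEq <|
    Filter.eventually_of_mem (hW.mem_nhds hz) fun _ hy => hφ.map_zero _ hy

theorem tendstoUniformlyOn {J : E → E →L[ℝ] E} {T ε L : ℝ} (hφ : IsSemiflowOn W F φ)
    (hF : ∀ y ∈ W, HasFDerivAt F (J y) y) (hz : z ∈ W) (hε0 : 0 < ε)
    (hε : ∀ t ∈ Icc 0 T, closedBall (φ t z) ε ⊆ W)
    (hL : ∀ t ∈ Icc 0 T, ∀ y ∈ closedBall (φ t z) ε, ‖J y‖ ≤ L) :
    TendstoUniformlyOn (fun y t => φ t y) (fun t => φ t z) (𝓝 z) (Icc 0 T) := by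
  rw [Metric.tendstoUniformlyOn_iff]
  intro r hr
  set K := max L 0 + 1
  set ρ := min r ε / (2 * Real.exp (K * T))
  have hρ : 0 < ρ := div_pos (lt_min hr hε0) (mul_pos two_pos (Real.exp_pos _))
  have hρT : ρ * Real.exp (K * T) = min r ε / 2 := by
    simp only [ρ]; field_simp
  filter_upwards [ball_mem_nhds z hρ] with y hyz t ht
  have hT : 0 ≤ T := ht.1.trans ht.2
  have hK : 0 ≤ K := by positivity
  have hρε : ρ ≤ ε := by
    have := Real.one_le_exp (mul_nonneg hK hT)
    nlinarith [min_le_right r ε]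
  have hy : y ∈ W := hε 0 ⟨le_rfl, hT⟩ (by
    rw [hφ.map_zero z hz]; exact ball_subset_closedBall (ball_subset_ball hρε hyz))
  have hlip : ∀ t ∈ Ico 0 T, ∀ x ∈ closedBall (φ t z) ε, ‖F x - F (φ t z)‖ ≤ L * ‖x - φ t z‖ :=
    fun t ht x hx => (convex_closedBall _ _).norm_image_sub_le_of_norm_hasFDerivWithin_le
      (fun w hw => (hF w (hε t (Ico_subset_Icc_self ht) hw)).hasFDerivWithinAt)
      (hL t (Ico_subset_Icc_self ht)) (mem_closedBall_self hε0.le) hx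
  have hclose := norm_sub_le_mul_exp_of_lipschitz_near
    ((hφ.continuousOn hz).mono Icc_subset_Ici_self) (fun t ht => hφ.hasDerivWithinAt_Ici hz ht.1)
    ((hφ.continuousOn hy).mono Icc_subset_Ici_self) (fun t ht => hφ.hasDerivWithinAt_Ici hy ht.1)
    hlip hK (by linarith [le_max_left L 0]) hρ
    (by rw [hφ.map_zero z hz, hφ.map_zero y hy, ← dist_eq_norm]; exact (mem_ball.1 hyz).le)
    (by rw [hρT]; linarith [min_le_right r ε]) t ht
  rw [dist_comm, dist_eq_norm]
  calc ‖φ t y - φ t z‖ ≤ ρ * Real.exp (K * t) := hclose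
    _ ≤ ρ * Real.exp (K * T) := by gcongr; exact ht.2
    _ < r := by rw [hρT]; linarith [min_le_left r ε]

theorem exists_forall_Icc_dist_lt (hφ : IsSemiflowOn W F φ) (hz : z ∈ W) {t T r : ℝ}
    (ht : 0 < t) (htT : t < T) (hr : 0 < r) :
    ∃ d ∈ Ioo t T, ∀ x ∈ Icc t d, dist (φ x z) (φ t z) < r := by
  obtain ⟨d, htd, hsub⟩ := mem_nhdsGE_iff_exists_Icc_subset.1 <| inter_mem
    (((hφ.hasDerivAt hz ht).continuousAt.tendsto.mono_left nhdsWithin_le_nhds).eventually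
      (ball_mem_nhds _ hr))
    (mem_nhdsWithin_of_mem_nhds (Iio_mem_nhds htT))
  exact ⟨d, ⟨htd, (hsub (right_mem_Icc.2 htd.le)).2⟩, fun x hx => (hsub hx).1⟩

theorem exists_tube {J : E → E →L[ℝ] E} [ProperSpace E] (hφ : IsSemiflowOn W F φ) (hW : IsOpen W)
    (hJ : ContinuousOn J W) (hz : z ∈ W) (T : ℝ) :
    ∃ ε > 0, ∃ L, (∀ t ∈ Icc 0 T, closedBall (φ t z) ε ⊆ W) ∧
      ∀ t ∈ Icc 0 T, ∀ y ∈ closedBall (φ t z) ε, ‖J y‖ ≤ L := by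
  obtain ⟨ε, hε, L, htube⟩ := (isCompact_Icc.image_of_continuousOn
    ((hφ.continuousOn hz).mono Icc_subset_Ici_self)).exists_closedBall_subset_norm_le hW
    (image_subset_iff.2 fun t ht => hφ.mapsTo t ht.1 z hz) hJ
  exact ⟨ε, hε, L, fun t ht => (htube _ ⟨t, ht, rfl⟩).1, fun t ht => (htube _ ⟨t, ht, rfl⟩).2⟩

end NormedSpace

theorem exp_mul_orthantGap_add_le {ι : Type*} [Fintype ι] {σ : ι → ℝ} {W : Set (ι → ℝ)}
    {F : (ι → ℝ) → ι → ℝ} {φ : ℝ → (ι → ℝ) → ι → ℝ} {z y : ι → ℝ} {L t₁ t₂ m : ℝ}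
    (hφ : IsSemiflowOn W F φ) (hz : z ∈ W) (hy : y ∈ W) (h₁ : 0 ≤ t₁) (h₁₂ : t₁ ≤ t₂) (k : ι)
    (hm : ∀ x ∈ Ioo t₁ t₂, m ≤ Real.exp (L * x) * (orthantGap σ (F (φ x z)) (F (φ x y)) k +
      L * orthantGap σ (φ x z) (φ x y) k)) :
    Real.exp (L * t₁) * orthantGap σ (φ t₁ z) (φ t₁ y) k + m * (t₂ - t₁) ≤
      Real.exp (L * t₂) * orthantGap σ (φ t₂ z) (φ t₂ y) k := by
  refine exp_mul_add_le_of_le_deriv h₁₂ (fun x hx => ?_) (fun x hx => ?_) hm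
  · exact ((hφ.hasDerivWithinAt z hz x (h₁.trans hx.1)).orthantGap
      (hφ.hasDerivWithinAt y hy x (h₁.trans hx.1)) k).continuousWithinAt.mono
      (Icc_subset_Ici_iff h₁₂ |>.2 h₁)
  · have hx0 : 0 < x := h₁.trans_lt hx.1
    exact ((hφ.hasDerivWithinAt z hz x hx0.le).orthantGap
      (hφ.hasDerivWithinAt y hy x hx0.le) k).hasDerivAt (Ici_mem_nhds hx0)

end IsSemiflowOn

def IsOrthantMonotoneOn {ι : Type*} (σ : ι → ℝ) (W : Set (ι → ℝ)) (φ : ℝ → (ι → ℝ) → ι → ℝ) :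
    Prop :=
  ∀ t ∈ Ici (0 : ℝ), ∀ z₁ ∈ W, ∀ z₂ ∈ W, OrthantLE σ z₁ z₂ → OrthantLE σ (φ t z₁) (φ t z₂)

namespace IsOrthantMonotoneOn

variable {ι : Type*} [Fintype ι] {σ : ι → ℝ} {W : Set (ι → ℝ)}
  {F : (ι → ℝ) → ι → ℝ} {φ : ℝ → (ι → ℝ) → ι → ℝ}

/-- For small `s > 0` the `i`-th σ-gap between the trajectories of `y` and `y + s e` starts at `0`
and stays nonnegative, so its right derivative `σᵢ (F (y + s e) - F y)ᵢ` at `t = 0` is nonnegative;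
differentiating that in `s` at `0` gives the claim. -/
theorem mul_fderiv_apply_nonneg (hmono : IsOrthantMonotoneOn σ W φ) (hW : IsOpen W)
    (hφ : IsSemiflowOn W F φ) {y : ι → ℝ} {A : (ι → ℝ) →L[ℝ] ι → ℝ} (hy : y ∈ W)
    (hF : HasFDerivAt F A y) {e : ι → ℝ} (he : OrthantLE σ 0 e) {i : ι} (hei : e i = 0) :
    0 ≤ σ i * A e i := by
  have hFline : HasDerivWithinAt (fun s : ℝ => orthantGap σ (F y) (F (y + s • e)) i)
      (orthantGap σ 0 (A e) i) (Ici 0) 0 :=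
    (hasDerivWithinAt_const _ _ _).orthantGap
      ((hF.comp_hasDerivAt_of_eq 0 (hasDerivAt_add_smul y e 0) (by simp)).hasDerivWithinAt) i
  have hFgap : ∀ᶠ s in 𝓝[>] (0 : ℝ), 0 ≤ orthantGap σ (F y) (F (y + s • e)) i := by
    filter_upwards [self_mem_nhdsWithin, (tendsto_add_smul_nhdsGT y e).eventually
      (hW.mem_nhds hy)] with s (hs : 0 < s) hsW
    have hgap : HasDerivWithinAt (fun t => orthantGap σ (φ t y) (φ t (y + s • e)) i)
        (orthantGap σ (F y) (F (y + s • e)) i) (Ici 0) 0 := by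
      simpa only [hφ.map_zero y hy, hφ.map_zero _ hsW] using
        (hφ.hasDerivWithinAt y hy 0 self_mem_Ici).orthantGap
          (hφ.hasDerivWithinAt _ hsW 0 self_mem_Ici) i
    refine hgap.nonneg_of_eventually_le ?_
    filter_upwards [self_mem_nhdsWithin] with t (ht : 0 < t)
    rw [hφ.map_zero y hy, hφ.map_zero _ hsW]
    simpa [orthantGap, hei] using
      orthantGap_nonneg (hmono t ht.le y hy _ hsW (orthantLE_add_smul he hs.le)) i
  have := hFline.nonneg_of_eventually_le (hFgap.mono fun s hs => by simpa [orthantGap] using hs)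
  simpa [orthantGap] using this

theorem isCooperativeOn [DecidableEq ι] {J : (ι → ℝ) → (ι → ℝ) →L[ℝ] ι → ℝ}
    (hmono : IsOrthantMonotoneOn σ W φ) (hW : IsOpen W) (hφ : IsSemiflowOn W F φ)
    (hF : ∀ y ∈ W, HasFDerivAt F (J y) y) : IsCooperativeOn σ W J := by
  intro y hy i k hik
  have he : OrthantLE σ 0 (Pi.single k (σ k)) := fun l => by
    rcases eq_or_ne l k with rfl | hlk
    · simpa using mul_self_nonneg (σ l)
    · simp [Pi.single_eq_of_ne hlk]
  have := hmono.mul_fderiv_apply_nonneg hW hφ hy (hF y hy) he (Pi.single_eq_of_ne hik _)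
  have hsingle : Pi.single k (σ k) = σ k • (Pi.single k 1 : ι → ℝ) := by
    rw [← Pi.single_smul, smul_eq_mul, mul_one]
  rw [hsingle, map_smul] at this
  simpa [mul_left_comm, mul_assoc] using this

end IsOrthantMonotoneOn

section FlowComparison

variable {ι : Type*} [Fintype ι] [DecidableEq ι] {σ : ι → ℝ} {W : Set (ι → ℝ)}
  {F : (ι → ℝ) → ι → ℝ} {J : (ι → ℝ) → (ι → ℝ) →L[ℝ] ι → ℝ} {φ : ℝ → (ι → ℝ) → ι → ℝ}
  {z y : ι → ℝ} {T ε L : ℝ}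

theorem IsCooperativeOn.monotoneOn_exp_mul_orthantGap (hcoop : IsCooperativeOn σ W J)
    (hσ : ∀ k, σ k * σ k = 1) (hF : ∀ y ∈ W, HasFDerivAt F (J y) y) (hφ : IsSemiflowOn W F φ)
    (hmono : IsOrthantMonotoneOn σ W φ) (hz : z ∈ W) (hy : y ∈ W) (hzy : OrthantLE σ z y)
    (hε : ∀ t ∈ Icc 0 T, closedBall (φ t z) ε ⊆ W)
    (hL : ∀ t ∈ Icc 0 T, ∀ x ∈ closedBall (φ t z) ε, ‖J x‖ ≤ L)
    (hclose : ∀ t ∈ Icc 0 T, φ t y ∈ closedBall (φ t z) ε) (k : ι) :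
    MonotoneOn (fun t => Real.exp (L * t) * orthantGap σ (φ t z) (φ t y) k) (Icc 0 T) := by
  intro t₁ h₁ t₂ h₂ h₁₂
  have := hφ.exp_mul_orthantGap_add_le (σ := σ) (L := L) hz hy h₁.1 h₁₂ k (m := 0) fun x hx => by
    have hx : x ∈ Icc 0 T := ⟨h₁.1.trans hx.1.le, hx.2.le.trans h₂.2⟩
    have hKamke := (hcoop.mono (hε x hx)).neg_mul_orthantGap_le (i := k) hσ
      (fun w hw => hF w (hε x hx hw)) (convex_closedBall _ _) (hL x hx)
      (mem_closedBall_self (nonempty_closedBall.1 ⟨_, hclose x hx⟩)) (hclose x hx)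
      (hmono x hx.1 z hz y hy hzy)
    exact mul_nonneg (Real.exp_pos _).le (by linarith)
  simpa using this

theorem IsCooperativeOn.mul_exp_mul_orthantGap_le (hcoop : IsCooperativeOn σ W J)
    (hσ : ∀ k, σ k * σ k = 1) (hF : ∀ y ∈ W, HasFDerivAt F (J y) y) (hφ : IsSemiflowOn W F φ)
    (hmono : IsOrthantMonotoneOn σ W φ) (hz : z ∈ W) (hy : y ∈ W) (hzy : OrthantLE σ z y)
    {t d δ : ℝ} {U : Set (ι → ℝ)} {i j : ι} (ht : 0 ≤ t) (htd : t ≤ d) (hU : Convex ℝ U)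
    (hUW : U ⊆ W) (hUL : ∀ x ∈ U, ‖J x‖ ≤ L) (hij : i ≠ j)
    (hδ : ∀ x ∈ U, δ ≤ σ i * σ j * J x (Pi.single j 1) i) (hδ0 : 0 ≤ δ)
    (htraj : ∀ x ∈ Icc t d, φ x z ∈ U ∧ φ x y ∈ U)
    (hgrow : MonotoneOn (fun x => Real.exp (L * x) * orthantGap σ (φ x z) (φ x y) j) (Icc t d)) :
    δ * (d - t) * (Real.exp (L * t) * orthantGap σ (φ t z) (φ t y) j) ≤
      Real.exp (L * d) * orthantGap σ (φ d z) (φ d y) i := by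
  have key := hφ.exp_mul_orthantGap_add_le hz hy ht htd i
    (m := δ * (Real.exp (L * t) * orthantGap σ (φ t z) (φ t y) j)) fun x hx => by
    have hxI : x ∈ Icc t d := Ioo_subset_Icc_self hx
    have hKamke := (hcoop.mono hUW).neg_mul_orthantGap_add_le hσ (fun w hw => hF w (hUW hw)) hU
      hUL hij hδ (htraj x hxI).1 (htraj x hxI).2 (hmono x (ht.trans hxI.1) z hz y hy hzy)
    calc δ * (Real.exp (L * t) * orthantGap σ (φ t z) (φ t y) j)
        ≤ δ * (Real.exp (L * x) * orthantGap σ (φ x z) (φ x y) j) :=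
          mul_le_mul_of_nonneg_left (hgrow (left_mem_Icc.2 htd) hxI hxI.1) hδ0
      _ = Real.exp (L * x) * (δ * orthantGap σ (φ x z) (φ x y) j) := by ring
      _ ≤ _ := mul_le_mul_of_nonneg_left (by linarith) (Real.exp_pos _).le
  have hgap := mul_nonneg (Real.exp_pos (L * t)).le
    (orthantGap_nonneg (hmono t ht z hz y hy hzy) i)
  linarith

end FlowComparison

section Linearization

variable {ι : Type*} [Fintype ι] {σ : ι → ℝ} {W : Set (ι → ℝ)}
  {F : (ι → ℝ) → ι → ℝ} {J : (ι → ℝ) → (ι → ℝ) →L[ℝ] ι → ℝ} {φ : ℝ → (ι → ℝ) → ι → ℝ}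
  {Dφ : ℝ → (ι → ℝ) →L[ℝ] ι → ℝ} {z v : ι → ℝ} {T ε L : ℝ}

theorem eventually_add_smul_close (hW : IsOpen W) (hF : ∀ y ∈ W, HasFDerivAt F (J y) y)
    (hφ : IsSemiflowOn W F φ) (hz : z ∈ W) (hε0 : 0 < ε)
    (hε : ∀ t ∈ Icc 0 T, closedBall (φ t z) ε ⊆ W)
    (hL : ∀ t ∈ Icc 0 T, ∀ x ∈ closedBall (φ t z) ε, ‖J x‖ ≤ L) (hv : OrthantLE σ 0 v) {r : ℝ}
    (hr : 0 < r) :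
    ∀ᶠ s in 𝓝[>] (0 : ℝ), 0 < s ∧ z + s • v ∈ W ∧ OrthantLE σ z (z + s • v) ∧
      ∀ t ∈ Icc 0 T, dist (φ t (z + s • v)) (φ t z) < r := by
  have hline := tendsto_add_smul_nhdsGT z v
  have hunif := Metric.tendstoUniformlyOn_iff.1 (hφ.tendstoUniformlyOn hF hz hε0 hε hL) r hr
  filter_upwards [self_mem_nhdsWithin, hline.eventually (hW.mem_nhds hz),
    hline.eventually hunif] with s (hs : 0 < s) hsW hclose
  exact ⟨hs, hsW, orthantLE_add_smul hv hs.le, fun t ht => by rw [dist_comm]; exact hclose t ht⟩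

variable [DecidableEq ι] (hσ : ∀ k, σ k * σ k = 1) (hW : IsOpen W)
  (hF : ∀ y ∈ W, HasFDerivAt F (J y) y) (hcoop : IsCooperativeOn σ W J)
  (hφ : IsSemiflowOn W F φ) (hmono : IsOrthantMonotoneOn σ W φ) (hz : z ∈ W) (hε0 : 0 < ε)
  (hε : ∀ t ∈ Icc 0 T, closedBall (φ t z) ε ⊆ W)
  (hL : ∀ t ∈ Icc 0 T, ∀ x ∈ closedBall (φ t z) ε, ‖J x‖ ≤ L)
  (hDφ : ∀ t ∈ Icc 0 T, HasFDerivAt (φ t) (Dφ t) z) (hv : OrthantLE σ 0 v)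
include hσ hW hF hcoop hφ hmono hz hε0 hε hL hDφ hv

theorem monotoneOn_exp_mul_fderiv_apply (k : ι) :
    MonotoneOn (fun t => Real.exp (L * t) * (σ k * Dφ t v k)) (Icc 0 T) := by
  intro t₁ h₁ t₂ h₂ h₁₂
  refine le_of_tendsto_of_tendsto (((hDφ t₁ h₁).tendsto_inv_mul_orthantGap v k).const_mul _)
    (((hDφ t₂ h₂).tendsto_inv_mul_orthantGap v k).const_mul _) ?_
  filter_upwards [eventually_add_smul_close hW hF hφ hz hε0 hε hL hv hε0]
    with s ⟨hs, hyW, hzy, hclose⟩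
  have := hcoop.monotoneOn_exp_mul_orthantGap hσ hF hφ hmono hz hyW hzy hε hL
    (fun t ht => mem_closedBall.2 (hclose t ht).le) k h₁ h₂ h₁₂
  simpa only [mul_left_comm _ s⁻¹] using mul_le_mul_of_nonneg_left this (inv_nonneg.2 hs.le)

theorem exists_mul_le_exp_mul_fderiv_apply (hJ : ContinuousOn J W) :
    ∀ t ∈ Ioo 0 T, ∀ i j, i ≠ j → J (φ t z) (Pi.single j 1) i ≠ 0 →
      ∃ d ∈ Ioo t T, ∃ c > 0, c * (σ j * Dφ t v j) ≤ Real.exp (L * d) * (σ i * Dφ d v i) := by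
  intro t ht i j hij hJij
  have htI : t ∈ Icc 0 T := Ioo_subset_Icc_self ht
  set p := φ t z
  have hpW : p ∈ W := hφ.mapsTo t ht.1.le z hz
  have hpos : 0 < σ i * σ j * J p (Pi.single j 1) i :=
    (hcoop p hpW i j hij).lt_of_ne (mul_ne_zero (mul_ne_zero (left_ne_zero_of_mul_eq_one (hσ i))
      (left_ne_zero_of_mul_eq_one (hσ j))) hJij).symm
  set δ := σ i * σ j * J p (Pi.single j 1) i / 2
  obtain ⟨ρ, hρ, hρδ⟩ : ∃ ρ > 0, ∀ x ∈ ball p ρ, δ ≤ σ i * σ j * J x (Pi.single j 1) i := by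
    have hcont : ContinuousAt (fun x => σ i * σ j * J x (Pi.single j 1) i) p :=
      continuousAt_const.mul (continuous_apply i |>.continuousAt.comp
        ((hJ.continuousAt (hW.mem_nhds hpW)).clm_apply continuousAt_const))
    obtain ⟨ρ, hρ, h⟩ := Metric.eventually_nhds_iff_ball.1
      (hcont.eventually (lt_mem_nhds (half_lt_self hpos)))
    exact ⟨ρ, hρ, fun x hx => (h x hx).le⟩
  set r := min ρ ε
  have hr : 0 < r := lt_min hρ hε0
  have hUε : ball p r ⊆ closedBall p ε :=
    (ball_subset_ball (min_le_right _ _)).trans ball_subset_closedBall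
  obtain ⟨d, ⟨htd, hdT⟩, hnear⟩ := hφ.exists_forall_Icc_dist_lt hz ht.1 ht.2 (half_pos hr)
  have hδ0 : 0 < δ := half_pos hpos
  refine ⟨d, ⟨htd, hdT⟩, δ * (d - t) * Real.exp (L * t),
    mul_pos (mul_pos hδ0 (sub_pos.2 htd)) (Real.exp_pos _), ?_⟩
  refine le_of_tendsto_of_tendsto (((hDφ t htI).tendsto_inv_mul_orthantGap v j).const_mul _)
    (((hDφ d ⟨ht.1.le.trans htd.le, hdT.le⟩).tendsto_inv_mul_orthantGap v i).const_mul _) ?_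
  filter_upwards [eventually_add_smul_close hW hF hφ hz hε0 hε hL hv (half_pos hr)]
    with s ⟨hs, hyW, hzy, hclose⟩
  have htraj : ∀ x ∈ Icc t d, φ x z ∈ ball p r ∧ φ x (z + s • v) ∈ ball p r := fun x hx => by
    have hzx := hnear x hx
    have hyx := hclose x ⟨ht.1.le.trans hx.1, hx.2.trans hdT.le⟩
    exact ⟨mem_ball.2 (by linarith),
      mem_ball.2 (by linarith [dist_triangle (φ x (z + s • v)) (φ x z) p])⟩
  have hgrow := hcoop.monotoneOn_exp_mul_orthantGap hσ hF hφ hmono hz hyW hzy hε hL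
    (fun x hx => mem_closedBall.2 ((hclose x hx).le.trans (by linarith [min_le_right ρ ε]))) j
  have := hcoop.mul_exp_mul_orthantGap_le hσ hF hφ hmono hz hyW hzy ht.1.le htd.le
    (convex_ball p r) (hUε.trans (hε t htI)) (fun x hx => hL t htI x (hUε hx)) hij
    (fun x hx => hρδ x (ball_subset_ball (min_le_left _ _) hx)) hδ0.le htraj
    (hgrow.mono (Icc_subset_Icc ht.1.le hdT.le))
  simpa only [mul_left_comm _ s⁻¹, mul_assoc] using
    mul_le_mul_of_nonneg_left this (inv_nonneg.2 hs.le)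

end Linearization

theorem forall_pos_of_coupling {ι : Type*} [Fintype ι] {w : ℝ → ι → ℝ} {T : ℝ} (hT : 0 < T)
    (hpersist : ∀ k, ∀ t₁ ∈ Icc 0 T, ∀ t₂ ∈ Icc 0 T, t₁ ≤ t₂ → 0 < w t₁ k → 0 < w t₂ k)
    (hstart : ∃ k, 0 < w 0 k)
    (hcouple : ∀ t ∈ Ioo 0 T, ∀ S : Finset ι, S.Nonempty → S ≠ Finset.univ →
      ∃ i ∈ S, ∃ j ∉ S, 0 < w t j → ∃ d ∈ Ioo t T, 0 < w d i) :
    ∀ i, 0 < w T i := by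
  classical
  by_contra! ⟨i₀, hi₀⟩
  set S := Finset.univ.filter fun i => ∀ t ∈ Ico 0 T, w t i ≤ 0
  have hS : S.Nonempty := ⟨i₀, Finset.mem_filter.2 ⟨Finset.mem_univ _, fun t ht => not_lt.1
    fun hpos => hi₀.not_gt (hpersist i₀ t (Ico_subset_Icc_self ht) T ⟨hT.le, le_rfl⟩ ht.2.le hpos)⟩⟩
  have hSu : S ≠ Finset.univ := by
    obtain ⟨k, hk⟩ := hstart
    intro h
    have hkS : k ∈ S := h ▸ Finset.mem_univ k
    exact ((Finset.mem_filter.1 hkS).2 0 ⟨le_rfl, hT⟩).not_gt hk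
  have hlate : ∀ᶠ t in 𝓝[<] T, t ∈ Ioo 0 T ∧ ∀ j, j ∉ S → 0 < w t j := by
    refine Filter.Eventually.and (Ioo_mem_nhdsLT hT) (eventually_all.2 fun j => ?_)
    by_cases hj : j ∈ S
    · exact Eventually.of_forall fun _ h => (h hj).elim
    · obtain ⟨t₀, h₀, hT₀, hpos⟩ : ∃ t₀, 0 ≤ t₀ ∧ t₀ < T ∧ 0 < w t₀ j := by simpa [S] using hj
      filter_upwards [Ioo_mem_nhdsLT hT₀] with t ht _
      exact hpersist j t₀ ⟨h₀, hT₀.le⟩ t ⟨h₀.trans ht.1.le, ht.2.le⟩ ht.1.le hpos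
  obtain ⟨t, ht, hpos⟩ := hlate.exists
  obtain ⟨i, hi, j, hj, hij⟩ := hcouple t ht S hS hSu
  obtain ⟨d, hd, hwd⟩ := hij (hpos j hj)
  exact hwd.not_ge ((Finset.mem_filter.1 hi).2 d ⟨ht.1.le.trans hd.1.le, hd.2⟩)

theorem monotone_irreducible_implies_positive_derivatives_general
    (n : ℕ) (σ : Fin n → ℝ) (hσ : ∀ i, σ i = 1 ∨ σ i = -1)
    (W : Set (Fin n → ℝ)) (hWopen : IsOpen W)
    (F : (Fin n → ℝ) → Fin n → ℝ)
    (J : (Fin n → ℝ) → (Fin n → ℝ) →L[ℝ] (Fin n → ℝ))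
    (hF : ∀ z ∈ W, HasFDerivAt F (J z) z)
    (hJcont : ContinuousOn J W)
    (φ : ℝ → (Fin n → ℝ) → Fin n → ℝ)
    (hinv : ∀ t ∈ Set.Ici (0 : ℝ), ∀ z ∈ W, φ t z ∈ W)
    (hφ0 : ∀ z ∈ W, φ 0 z = z)
    (hode : ∀ z ∈ W, ∀ t ∈ Set.Ici (0 : ℝ),
        HasDerivWithinAt (fun τ => φ τ z) (F (φ t z)) (Set.Ici 0) t)
    (Dφ : ℝ → (Fin n → ℝ) → (Fin n → ℝ) →L[ℝ] (Fin n → ℝ))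
    (hDφ : ∀ t ∈ Set.Ici (0 : ℝ), ∀ z ∈ W, HasFDerivAt (φ t) (Dφ t z) z)
    (hmono : ∀ t ∈ Set.Ici (0 : ℝ), ∀ z₁ ∈ W, ∀ z₂ ∈ W,
        (∀ i, σ i * z₁ i ≤ σ i * z₂ i) → ∀ i, σ i * φ t z₁ i ≤ σ i * φ t z₂ i)
    (hirr : ∀ z ∈ W, ∀ S : Finset (Fin n), S.Nonempty → S ≠ Finset.univ →
        ∃ i ∈ S, ∃ j, j ∉ S ∧ J z (Pi.single j 1) i ≠ 0) :
    ∀ t > (0 : ℝ), ∀ z ∈ W, ∀ v : Fin n → ℝ, v ≠ 0 → (∀ i, 0 ≤ σ i * v i) →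
      ∀ i, 0 < σ i * (Dφ t z v) i := by
  intro T hT z hz v hv0 hvσ
  have hσ' : ∀ i, σ i * σ i = 1 := fun i => mul_self_eq_one_iff.2 (hσ i)
  have hφ : IsSemiflowOn W F φ := ⟨hinv, hφ0, hode⟩
  have hcoop := IsOrthantMonotoneOn.isCooperativeOn hmono hWopen hφ hF
  obtain ⟨ε, hε0, L, hε, hL⟩ := hφ.exists_tube hWopen hJcont hz T
  have hDφz : ∀ t ∈ Icc 0 T, HasFDerivAt (φ t) (Dφ t z) z := fun t ht => hDφ t ht.1 z hz
  have hv : OrthantLE σ 0 v := by simpa [OrthantLE] using hvσ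
  have hgrow := monotoneOn_exp_mul_fderiv_apply hσ' hWopen hF hcoop hφ hmono hz hε0 hε hL hDφz hv
  have hcouple := exists_mul_le_exp_mul_fderiv_apply hσ' hWopen hF hcoop hφ hmono hz hε0 hε hL
    hDφz hv hJcont
  refine forall_pos_of_coupling hT (w := fun t k => σ k * Dφ t z v k)
    (fun k t₁ h₁ t₂ h₂ h₁₂ hpos => ?_) ?_ fun t ht S hS hSu => ?_
  · exact pos_of_mul_pos_right ((mul_pos (Real.exp_pos _) hpos).trans_le
      (hgrow k h₁ h₂ h₁₂)) (Real.exp_pos _).le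
  · rw [(hDφ 0 self_mem_Ici z hz).unique (hφ.hasFDerivAt_zero hWopen hz)]
    exact hv.exists_pos_of_ne_zero (fun i => left_ne_zero_of_mul_eq_one (hσ' i)) hv0
  · obtain ⟨i, hi, j, hj, hJ⟩ := hirr (φ t z) (hinv t ht.1.le z hz) S hS hSu
    obtain ⟨d, hd, c, hc, hle⟩ := hcouple t ht i j (ne_of_mem_of_not_mem hi hj) hJ
    exact ⟨i, hi, j, hj, fun hwj =>
      ⟨d, hd, pos_of_mul_pos_right ((mul_pos hc hwj).trans_le hle) (Real.exp_pos _).le⟩⟩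

/-- Proposition 1: if the flow `φ` of `ẋ = F(x)` (with `F` of class `C¹`) is
monotone with respect to the orthant cone `C_σ` and the Jacobian of `F` is
irreducible at every point of the open set `W`, then the flow has positive
derivatives on `W`: for `t > 0`, `z ∈ W` and nonzero `v ∈ C_σ`, the derivative
`D_z φ(t,z) v` lies in the interior of `C_σ`. -/
theorem monotone_irreducible_implies_positive_derivatives
    (n : ℕ) (σ : Fin n → ℝ) (hσ : ∀ i, σ i = 1 ∨ σ i = -1)
    (W : Set (Fin n → ℝ)) (hWopen : IsOpen W)
    (F : (Fin n → ℝ) → Fin n → ℝ)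
    (J : (Fin n → ℝ) → (Fin n → ℝ) →L[ℝ] (Fin n → ℝ))
    (hF : ∀ z ∈ W, HasFDerivAt F (J z) z)
    (hJcont : ContinuousOn J W)
    (φ : ℝ → (Fin n → ℝ) → Fin n → ℝ)
    (hinv : ∀ t ∈ Set.Ici (0 : ℝ), ∀ z ∈ W, φ t z ∈ W)
    (hφ0 : ∀ z ∈ W, φ 0 z = z)
    (hode : ∀ z ∈ W, ∀ t ∈ Set.Ici (0 : ℝ),
        HasDerivWithinAt (fun τ => φ τ z) (F (φ t z)) (Set.Ici 0) t)
    (Dφ : ℝ → (Fin n → ℝ) → (Fin n → ℝ) →L[ℝ] (Fin n → ℝ))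
    (hDφ : ∀ t ∈ Set.Ici (0 : ℝ), ∀ z ∈ W, HasFDerivAt (φ t) (Dφ t z) z)
    (hDφcont : ∀ t ∈ Set.Ici (0 : ℝ), ContinuousOn (Dφ t) W)
    (hmono : ∀ t ∈ Set.Ici (0 : ℝ), ∀ z₁ ∈ W, ∀ z₂ ∈ W,
        (∀ i, σ i * z₁ i ≤ σ i * z₂ i) → ∀ i, σ i * φ t z₁ i ≤ σ i * φ t z₂ i)
    (hirr : ∀ z ∈ W, ∀ S : Finset (Fin n), S.Nonempty → S ≠ Finset.univ →
        ∃ i ∈ S, ∃ j, j ∉ S ∧ J z (Pi.single j 1) i ≠ 0) :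
    ∀ t > (0 : ℝ), ∀ z ∈ W, ∀ v : Fin n → ℝ, v ≠ 0 → (∀ i, 0 ≤ σ i * v i) →
      ∀ i, 0 < σ i * (Dφ t z v) i :=
  monotone_irreducible_implies_positive_derivatives_general n σ hσ W hWopen F J hF hJcont φ hinv hφ0
    hode Dφ hDφ hmono hirr
end

section
/- (Proposition 2.) Let σ ∈ {−1,1}ⁿ with orthant cone C_σ, let W ⊆ ℝⁿ be open and p-convex with respect to ≤_σ, and let φ : [0,∞) × W → W be a flow (φ(0,z) = z, φ(t+s,z) = φ(t,φ(s,z)), z ↦ φ(t,z) continuously differentiable) with positive derivatives on W: for every t > 0, z ∈ W, and nonzero v ∈ C_σ, D_z φ(t,z) v lies in the interior of C_σ. Then the flow is strongly monotone on W: for all z₁, z₂ ∈ W with z₁ ≤_σ z₂ and z₁ ≠ z₂, and all t > 0, σ_i φ(t,z₁)_i < σ_i φ(t,z₂)_i for every coordinate i. -/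
/-!
By p-convexity the segment from `z₁` to `z₂` lies in `W`, and its direction `z₂ - z₁` is a
nonzero vector of `C_σ`. Positivity of the derivative makes `z ↦ σ i * φ t z i` have positive
derivative in that direction all along the segment, so the mean value theorem gives the strict
inequality between the endpoints.
-/

theorem lt_of_hasFDerivAt_pos_on_segment {E : Type*} [NormedAddCommGroup E] [NormedSpace ℝ E]
    {f : E → ℝ} {f' : E → StrongDual ℝ E} {x y : E}
    (hf : ∀ z ∈ segment ℝ x y, HasFDerivAt f (f' z) z)
    (hpos : ∀ z ∈ segment ℝ x y, 0 < f' z (y - x)) :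
    f x < f y := by
  obtain ⟨z, hz, hmvt⟩ := domain_mvt (fun z hz => (hf z hz).hasFDerivWithinAt)
    (convex_segment x y) (left_mem_segment ℝ x y) (right_mem_segment ℝ x y)
  linarith [hpos z hz]

theorem positive_derivatives_implies_strongly_monotone_general
    (n : ℕ) (σ : Fin n → ℝ)
    (W : Set (Fin n → ℝ))
    (hpconv : ∀ u ∈ W, ∀ v ∈ W, (∀ i, σ i * u i ≤ σ i * v i) →
        ∀ t ∈ Set.Icc (0 : ℝ) 1, (1 - t) • u + t • v ∈ W)
    (φ : ℝ → (Fin n → ℝ) → Fin n → ℝ)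
    (Dφ : ℝ → (Fin n → ℝ) → (Fin n → ℝ) →L[ℝ] (Fin n → ℝ))
    (hDφ : ∀ t ∈ Set.Ici (0 : ℝ), ∀ z ∈ W, HasFDerivAt (φ t) (Dφ t z) z)
    (hposder : ∀ t > (0 : ℝ), ∀ z ∈ W, ∀ v : Fin n → ℝ, v ≠ 0 →
        (∀ i, 0 ≤ σ i * v i) → ∀ i, 0 < σ i * (Dφ t z v) i) :
    ∀ z₁ ∈ W, ∀ z₂ ∈ W, (∀ i, σ i * z₁ i ≤ σ i * z₂ i) → z₁ ≠ z₂ →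
      ∀ t > (0 : ℝ), ∀ i, σ i * φ t z₁ i < σ i * φ t z₂ i := by
  intro z₁ hz₁ z₂ hz₂ hle hne t ht i
  have hseg : segment ℝ z₁ z₂ ⊆ W := by
    rw [segment_eq_image]
    rintro _ ⟨θ, hθ, rfl⟩
    exact hpconv z₁ hz₁ z₂ hz₂ hle θ hθ
  have hdir : ∀ j, 0 ≤ σ j * (z₂ - z₁) j := fun j => by
    simpa [mul_sub] using hle j
  refine lt_of_hasFDerivAt_pos_on_segment (f := fun z => σ i * φ t z i)
    (f' := fun z => σ i • (ContinuousLinearMap.proj i ∘L Dφ t z))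
    (fun z hz => ?_) (fun z hz => ?_)
  · exact ((ContinuousLinearMap.proj i).hasFDerivAt.comp z
      (hDφ t ht.le z (hseg hz))).const_mul (σ i)
  · simpa using hposder t ht z (hseg hz) (z₂ - z₁) (sub_ne_zero.2 hne.symm) hdir i

/-- Proposition 2: if `W` is open and p-convex with respect to the orthant order
`≤_σ` and the flow `φ` has positive derivatives on `W` (for `t > 0`, `z ∈ W` and
nonzero `v ∈ C_σ`, `D_z φ(t,z) v` lies in the interior of `C_σ`), then the flow is
strongly monotone on `W`. -/
theorem positive_derivatives_implies_strongly_monotone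
    (n : ℕ) (σ : Fin n → ℝ) (hσ : ∀ i, σ i = 1 ∨ σ i = -1)
    (W : Set (Fin n → ℝ)) (hWopen : IsOpen W)
    (hpconv : ∀ u ∈ W, ∀ v ∈ W, (∀ i, σ i * u i ≤ σ i * v i) →
        ∀ t ∈ Set.Icc (0 : ℝ) 1, (1 - t) • u + t • v ∈ W)
    (φ : ℝ → (Fin n → ℝ) → Fin n → ℝ)
    (hinv : ∀ t ∈ Set.Ici (0 : ℝ), ∀ z ∈ W, φ t z ∈ W)
    (hφ0 : ∀ z ∈ W, φ 0 z = z)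
    (hsemi : ∀ t ∈ Set.Ici (0 : ℝ), ∀ s ∈ Set.Ici (0 : ℝ), ∀ z ∈ W,
        φ (t + s) z = φ t (φ s z))
    (Dφ : ℝ → (Fin n → ℝ) → (Fin n → ℝ) →L[ℝ] (Fin n → ℝ))
    (hDφ : ∀ t ∈ Set.Ici (0 : ℝ), ∀ z ∈ W, HasFDerivAt (φ t) (Dφ t z) z)
    (hDφcont : ∀ t ∈ Set.Ici (0 : ℝ), ContinuousOn (Dφ t) W)
    (hposder : ∀ t > (0 : ℝ), ∀ z ∈ W, ∀ v : Fin n → ℝ, v ≠ 0 →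
        (∀ i, 0 ≤ σ i * v i) → ∀ i, 0 < σ i * (Dφ t z v) i) :
    ∀ z₁ ∈ W, ∀ z₂ ∈ W, (∀ i, σ i * z₁ i ≤ σ i * z₂ i) → z₁ ≠ z₂ →
      ∀ t > (0 : ℝ), ∀ i, σ i * φ t z₁ i < σ i * φ t z₂ i :=
  positive_derivatives_implies_strongly_monotone_general n σ W hpconv φ Dφ hDφ hposder
end

section
/- (Corollary 1.) Let σ ∈ {−1,1}ⁿ with orthant cone C_σ, let W ⊆ ℝⁿ be open and p-convex with respect to ≤_σ, and let F : W → ℝⁿ be continuously differentiable, generating a flow φ : [0,∞) × W → W (φ(0,z) = z, ∂φ/∂t = F(φ), z ↦ φ(t,z) continuously differentiable). Assume the flow is monotone with respect to ≤_σ and that the Jacobian ∂F/∂x(z) is an irreducible matrix for every z ∈ W. Then the flow is strongly monotone on W: for all z₁, z₂ ∈ W with z₁ ≤_σ z₂ and z₁ ≠ z₂, and all t > 0, σ_i φ(t,z₁)_i < σ_i φ(t,z₂)_i for every i. -/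
/-!
Comparing the solutions through two `≤_σ`-ordered points that agree in coordinate `i` shows that
monotonicity of the flow forces Kamke's condition on `F`; differentiating it gives the cooperative
sign pattern `σᵢ σⱼ Jᵢⱼ ≥ 0` (`i ≠ j`) of the Jacobian. Along two ordered solutions the gaps
`xₖ = σₖ (φ(s, z₂) - φ(s, z₁))ₖ ≥ 0` then satisfy `xₖ' ≥ -M xₖ`, so by Grönwall a positive gap
stays positive. At time `t > 0` let `S` be the set of vanishing gaps. These gaps vanish on all of
`[0, t]`, hence `Fₖ(φ(t, z₁)) = Fₖ(φ(t, z₂))` for `k ∈ S`; as the gaps outside `S` are positive,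
the sign pattern then forces `Jₖₘ = 0` for `k ∈ S`, `m ∉ S`. Irreducibility leaves only `S = ∅`,
and `S = univ` is excluded because `z₁ ≠ z₂` gives a gap that is positive from the start.
-/

open Set Filter Topology

lemma IsLocalMinOn.hasDerivWithinAt_Ici_nonneg {g : ℝ → ℝ} {a d : ℝ}
    (hmin : IsLocalMinOn g (Ici a) a) (hd : HasDerivWithinAt g d (Ici a) a) : 0 ≤ d := by
  have hcone : (1 : ℝ) ∈ posTangentConeAt (Ici a) a :=
    mem_posTangentConeAt_of_segment_subset (by
      rw [segment_eq_Icc (by linarith)]; exact Icc_subset_Ici_self)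
  simpa using hmin.hasFDerivWithinAt_nonneg hd.hasFDerivWithinAt hcone

lemma IsLocalMaxOn.hasDerivWithinAt_Ici_nonpos {g : ℝ → ℝ} {a d : ℝ}
    (hmax : IsLocalMaxOn g (Ici a) a) (hd : HasDerivWithinAt g d (Ici a) a) : d ≤ 0 := by
  simpa using hmax.neg.hasDerivWithinAt_Ici_nonneg hd.neg

lemma pos_of_neg_mul_le_deriv {f f' : ℝ → ℝ} {a b M : ℝ} (hab : a ≤ b)
    (hf : ContinuousOn f (Icc a b)) (hf' : ∀ x ∈ Ico a b, HasDerivWithinAt f (f' x) (Ici x) x)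
    (bound : ∀ x ∈ Ico a b, -(M * f x) ≤ f' x) (ha : 0 < f a) : 0 < f b := by
  have := le_gronwallBound_of_liminf_deriv_right_le (f := -f) (f' := -f') (δ := -f a) (K := -M)
    (ε := 0) hf.neg (fun x hx _ hr => (hf' x hx).neg.liminf_right_slope_le hr) le_rfl
    (fun x hx => by simpa only [Pi.neg_apply, add_zero, neg_mul_neg, neg_le] using bound x hx)
    b ⟨hab, le_rfl⟩
  rw [gronwallBound_ε0, Pi.neg_apply] at this
  nlinarith [Real.exp_pos (-M * (b - a))]

variable {ι : Type*}

lemma HasFDerivAt.hasDerivAt_coord_line [Fintype ι] {F : (ι → ℝ) → ι → ℝ}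
    {A : (ι → ℝ) →L[ℝ] ι → ℝ} {z w : ι → ℝ} {t : ℝ} (c : ℝ) (i : ι)
    (hF : HasFDerivAt F A (z + t • w)) :
    HasDerivAt (fun h : ℝ => c * F (z + h • w) i) (c * A w i) t := by
  have hline : HasDerivAt (fun h : ℝ => z + h • w) w t := by
    simpa using ((hasDerivAt_id t).smul_const w).const_add z
  exact ((hasDerivAt_pi.mp (hF.comp_hasDerivAt t hline)) i).const_mul c

lemma HasDerivWithinAt.coord_gap [Fintype ι] {u v : ℝ → ι → ℝ} {u' v' : ι → ℝ} {T : Set ℝ}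
    {s : ℝ} (hu : HasDerivWithinAt u u' T s) (hv : HasDerivWithinAt v v' T s) (c : ℝ) (k : ι) :
    HasDerivWithinAt (fun τ => c * (v τ k - u τ k)) (c * (v' k - u' k)) T s :=
  ((hasDerivWithinAt_pi.mp hv k).sub (hasDerivWithinAt_pi.mp hu k)).const_mul c

/-- Kamke's condition for the orthant order `≤_σ`. -/
def QuasimonotoneOn (σ : ι → ℝ) (F : (ι → ℝ) → ι → ℝ) (W : Set (ι → ℝ)) : Prop :=
  ∀ p ∈ W, ∀ q ∈ W, (∀ j, σ j * p j ≤ σ j * q j) → ∀ i, p i = q i → σ i * F p i ≤ σ i * F q i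

/-- Coordinate-free form of the sign pattern `σᵢ σⱼ Aᵢⱼ ≥ 0` for `i ≠ j`. -/
def IsCooperative (σ : ι → ℝ) (A : (ι → ℝ) →L[ℝ] ι → ℝ) : Prop :=
  ∀ w : ι → ℝ, (∀ j, 0 ≤ σ j * w j) → ∀ i, w i = 0 → 0 ≤ σ i * A w i

def IsIrreducibleMap [Fintype ι] [DecidableEq ι] (A : (ι → ℝ) →L[ℝ] ι → ℝ) : Prop :=
  ∀ S : Finset ι, S.Nonempty → S ≠ Finset.univ → ∃ i ∈ S, ∃ j, j ∉ S ∧ A (Pi.single j 1) i ≠ 0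

namespace IsCooperative

variable {σ : ι → ℝ} {A : (ι → ℝ) →L[ℝ] ι → ℝ} {δ : ι → ℝ}

lemma mul_apply_single_le [DecidableEq ι] (hA : IsCooperative σ A) (hδ : ∀ j, 0 ≤ σ j * δ j)
    {k m : ι} (hδk : Function.update δ m 0 k = 0) :
    σ k * (δ m * A (Pi.single m 1) k) ≤ σ k * A δ k := by
  have hsplit : δ = Function.update δ m 0 + δ m • Pi.single m 1 := by
    rw [Pi.update_eq_sub_add_single, Pi.single_zero, add_zero, ← Pi.single_smul', smul_eq_mul,
      mul_one, sub_add_cancel]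
  have hrest : 0 ≤ σ k * A (Function.update δ m 0) k := by
    refine hA _ (fun j => ?_) k hδk
    rcases eq_or_ne j m with rfl | hjm
    · simp
    · simpa [Function.update_of_ne hjm] using hδ j
  conv_rhs => rw [hsplit]
  simp only [map_add, map_smul, Pi.add_apply, Pi.smul_apply, smul_eq_mul]
  linarith

lemma neg_opNorm_mul_le [Fintype ι] (hA : IsCooperative σ A) (hδ : ∀ j, 0 ≤ σ j * δ j)
    (k : ι) : -(‖A‖ * (σ k * δ k)) ≤ σ k * A δ k := by
  classical
  have hdiag : |A (Pi.single k 1) k| ≤ ‖A‖ :=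
    calc |A (Pi.single k 1) k| ≤ ‖A (Pi.single k 1)‖ := norm_le_pi_norm (A (Pi.single k 1)) k
      _ ≤ ‖A‖ * ‖(Pi.single k 1 : ι → ℝ)‖ := A.le_opNorm _
      _ = ‖A‖ := by rw [Pi.norm_single, norm_one, mul_one]
  calc -(‖A‖ * (σ k * δ k)) ≤ σ k * (δ k * A (Pi.single k 1) k) := by
        nlinarith [neg_abs_le (A (Pi.single k 1) k), hδ k]
    _ ≤ σ k * A δ k := hA.mul_apply_single_le hδ (by simp)

lemma apply_single_eq_zero [DecidableEq ι] (hA : IsCooperative σ A) (hδ : ∀ j, 0 ≤ σ j * δ j)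
    {k m : ι} (hσk : σ k ≠ 0) (hδk : δ k = 0) (hδm : δ m ≠ 0) (hAδ : σ k * A δ k ≤ 0) :
    A (Pi.single m 1) k = 0 := by
  have hkm : k ≠ m := by rintro rfl; exact hδm hδk
  have hcone : ∀ j, 0 ≤ σ j * (δ m • Pi.single m 1 : ι → ℝ) j := fun j => by
    rcases eq_or_ne j m with rfl | hjm
    · simpa using hδ j
    · simp [hjm]
  have hlow : 0 ≤ σ k * (δ m * A (Pi.single m 1) k) := by
    simpa using hA _ hcone k (by simp [hkm])
  have hup := hA.mul_apply_single_le hδ (by rw [Function.update_of_ne hkm]; exact hδk)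
  have : σ k * (δ m * A (Pi.single m 1) k) = 0 := by linarith
  simpa [hσk, hδm] using this

end IsCooperative

section Flow

variable {σ : ι → ℝ} {F : (ι → ℝ) → ι → ℝ} {W : Set (ι → ℝ)}

lemma quasimonotoneOn_of_monotone_flow [Fintype ι] {φ : ℝ → (ι → ℝ) → ι → ℝ}
    (hφ0 : ∀ z ∈ W, φ 0 z = z)
    (hode : ∀ z ∈ W, HasDerivWithinAt (fun τ => φ τ z) (F z) (Ici 0) 0)
    (hmono : ∀ t ∈ Ici (0 : ℝ), ∀ z₁ ∈ W, ∀ z₂ ∈ W,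
        (∀ i, σ i * z₁ i ≤ σ i * z₂ i) → ∀ i, σ i * φ t z₁ i ≤ σ i * φ t z₂ i) :
    QuasimonotoneOn σ F W := by
  intro p hp q hq hpq i hi
  have hgap : IsLocalMinOn (fun τ => σ i * (φ τ q i - φ τ p i)) (Ici 0) 0 := by
    refine IsMinOn.localize fun τ hτ => ?_
    show σ i * (φ 0 q i - φ 0 p i) ≤ σ i * (φ τ q i - φ τ p i)
    rw [hφ0 p hp, hφ0 q hq, hi, sub_self, mul_zero]
    linarith [hmono τ hτ p hp q hq hpq i]
  linarith [hgap.hasDerivWithinAt_Ici_nonneg ((hode p hp).coord_gap (hode q hq) (σ i) i)]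

lemma QuasimonotoneOn.isCooperative [Fintype ι] (hQ : QuasimonotoneOn σ F W) (hW : IsOpen W)
    {z : ι → ℝ} {A : (ι → ℝ) →L[ℝ] ι → ℝ} (hz : z ∈ W) (hF : HasFDerivAt F A z) :
    IsCooperative σ A := by
  intro w hw i hwi
  have hmin : IsLocalMinOn (fun h : ℝ => σ i * F (z + h • w) i) (Ici 0) 0 := by
    have hmem : ∀ᶠ h : ℝ in 𝓝 0, z + h • w ∈ W :=
      (Continuous.tendsto' (by fun_prop) 0 z (by simp)).eventually (hW.mem_nhds hz)
    filter_upwards [nhdsWithin_le_nhds hmem, self_mem_nhdsWithin] with h hh (h0 : 0 ≤ h)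
    show σ i * F (z + (0 : ℝ) • w) i ≤ σ i * F (z + h • w) i
    rw [zero_smul, add_zero]
    refine hQ z hz _ hh (fun j => ?_) i (by simp [hwi])
    simpa [mul_add, mul_left_comm] using mul_nonneg h0 (hw j)
  exact hmin.hasDerivWithinAt_Ici_nonneg
    (HasFDerivAt.hasDerivAt_coord_line _ i (by simpa using hF)).hasDerivWithinAt

lemma orthantLE_right_of_mem_segment {p q z : ι → ℝ} (hpq : ∀ j, σ j * p j ≤ σ j * q j)
    (hz : z ∈ segment ℝ p q) (j : ι) : σ j * z j ≤ σ j * q j := by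
  obtain ⟨θ, ⟨-, hθ1⟩, rfl⟩ := (segment_eq_image' ℝ p q).subset hz
  simp only [Pi.add_apply, Pi.smul_apply, Pi.sub_apply, smul_eq_mul]
  nlinarith [hpq j]

/-- Along the segment from `p` to `q`, Kamke's condition makes `σₖ Fₖ` maximal at `p`. -/
lemma QuasimonotoneOn.fderiv_sub_nonpos [Fintype ι] (hQ : QuasimonotoneOn σ F W)
    {p q : ι → ℝ} {A : (ι → ℝ) →L[ℝ] ι → ℝ} (hF : HasFDerivAt F A p)
    (hseg : segment ℝ p q ⊆ W) (hpq : ∀ j, σ j * p j ≤ σ j * q j) {k : ι} (hk : p k = q k)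
    (hFk : F p k = F q k) : σ k * A (q - p) k ≤ 0 := by
  have hmax : IsLocalMaxOn (fun α : ℝ => σ k * F (p + α • (q - p)) k) (Ici 0) 0 := by
    filter_upwards [Icc_mem_nhdsGE zero_lt_one] with α hα
    have hmem : p + α • (q - p) ∈ segment ℝ p q :=
      (segment_eq_image' ℝ p q).symm ▸ ⟨α, hα, rfl⟩
    show σ k * F (p + α • (q - p)) k ≤ σ k * F (p + (0 : ℝ) • (q - p)) k
    rw [zero_smul, add_zero, hFk]
    exact hQ _ (hseg hmem) q (hseg (right_mem_segment ℝ p q))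
      (orthantLE_right_of_mem_segment hpq hmem) k (by simp [hk])
  exact hmax.hasDerivWithinAt_Ici_nonpos
    (HasFDerivAt.hasDerivAt_coord_line _ k (by simpa using hF)).hasDerivWithinAt

variable {u v : ℝ → ι → ℝ} {a b : ℝ}

lemma exists_bound_on_segments {E : Type*} [NormedAddCommGroup E] {G : (ι → ℝ) → E}
    (hG : ContinuousOn G W) (huc : ContinuousOn u (Icc a b)) (hvc : ContinuousOn v (Icc a b))
    (hseg : ∀ s ∈ Icc a b, segment ℝ (u s) (v s) ⊆ W) :
    ∃ M, ∀ s ∈ Icc a b, ∀ z ∈ segment ℝ (u s) (v s), ‖G z‖ ≤ M := by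
  set K := (fun x : ℝ × ℝ => u x.1 + x.2 • (v x.1 - u x.1)) '' (Icc a b ×ˢ Icc 0 1)
  have hsegK : ∀ s ∈ Icc a b, segment ℝ (u s) (v s) ⊆ K := by
    intro s hs
    rw [segment_eq_image']
    rintro _ ⟨θ, hθ, rfl⟩
    exact ⟨(s, θ), ⟨hs, hθ⟩, rfl⟩
  have hKW : K ⊆ W := by
    rintro _ ⟨x, hx, rfl⟩
    exact hseg x.1 hx.1 (by rw [segment_eq_image']; exact ⟨x.2, hx.2, rfl⟩)
  have hKc : IsCompact K := (isCompact_Icc.prod isCompact_Icc).image_of_continuousOn (by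
    have hu' : ContinuousOn (fun x : ℝ × ℝ => u x.1) (Icc a b ×ˢ Icc 0 1) :=
      huc.comp continuousOn_fst fun x hx => hx.1
    have hv' : ContinuousOn (fun x : ℝ × ℝ => v x.1) (Icc a b ×ˢ Icc 0 1) :=
      hvc.comp continuousOn_fst fun x hx => hx.1
    exact hu'.add (continuousOn_snd.smul (hv'.sub hu')))
  obtain ⟨M, hM⟩ := hKc.exists_bound_of_continuousOn (hG.mono hKW)
  exact ⟨M, fun s hs z hz => hM z (hsegK s hs hz)⟩

variable [Fintype ι] {J : (ι → ℝ) → (ι → ℝ) →L[ℝ] ι → ℝ}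

lemma neg_mul_le_sub_apply_of_segment_subset (hF : ∀ z ∈ W, HasFDerivAt F (J z) z)
    (hcoop : ∀ z ∈ W, IsCooperative σ (J z)) {p q : ι → ℝ} (hpq : ∀ j, σ j * p j ≤ σ j * q j)
    (hseg : segment ℝ p q ⊆ W) {M : ℝ} (hM : ∀ z ∈ segment ℝ p q, ‖J z‖ ≤ M) (k : ι) :
    -(M * (σ k * (q k - p k))) ≤ σ k * (F q k - F p k) := by
  have hcone : ∀ j, 0 ≤ σ j * (q - p) j := fun j => by simpa [mul_sub] using hpq j
  have hmem : ∀ α ∈ Icc (0 : ℝ) 1, p + α • (q - p) ∈ segment ℝ p q :=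
    fun α hα => (segment_eq_image' ℝ p q).symm ▸ ⟨α, hα, rfl⟩
  have hderiv : ∀ α ∈ Icc (0 : ℝ) 1, HasDerivAt (fun α : ℝ => σ k * F (p + α • (q - p)) k)
      (σ k * J (p + α • (q - p)) (q - p) k) α :=
    fun α hα => HasFDerivAt.hasDerivAt_coord_line _ k (hF _ (hseg (hmem α hα)))
  have hbound : ∀ α ∈ interior (Icc (0 : ℝ) 1), -(M * (σ k * (q k - p k))) ≤
      deriv (fun α : ℝ => σ k * F (p + α • (q - p)) k) α := by
    intro α hα
    have hα' := interior_subset hα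
    rw [(hderiv α hα').deriv]
    calc -(M * (σ k * (q k - p k))) ≤ -(‖J _‖ * (σ k * (q - p) k)) :=
          neg_le_neg (mul_le_mul_of_nonneg_right (hM _ (hmem α hα')) (hcone k))
      _ ≤ _ := (hcoop _ (hseg (hmem α hα'))).neg_opNorm_mul_le hcone k
  have := (convex_Icc (0 : ℝ) 1).mul_sub_le_image_sub_of_le_deriv
    (fun α hα => (hderiv α hα).continuousAt.continuousWithinAt)
    (fun α hα => (hderiv α (interior_subset hα)).differentiableAt.differentiableWithinAt)
    hbound 0 ⟨le_rfl, zero_le_one⟩ 1 ⟨zero_le_one, le_rfl⟩ zero_le_one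
  simpa [mul_sub] using this

lemma gap_pos_at_right_of_pos (hF : ∀ z ∈ W, HasFDerivAt F (J z) z) (hJ : ContinuousOn J W)
    (hcoop : ∀ z ∈ W, IsCooperative σ (J z))
    (hu : ∀ s ∈ Icc a b, HasDerivWithinAt u (F (u s)) (Icc a b) s)
    (hv : ∀ s ∈ Icc a b, HasDerivWithinAt v (F (v s)) (Icc a b) s)
    (hle : ∀ s ∈ Icc a b, ∀ j, σ j * u s j ≤ σ j * v s j)
    (hseg : ∀ s ∈ Icc a b, segment ℝ (u s) (v s) ⊆ W) {k : ι} {s : ℝ} (hs : s ∈ Icc a b)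
    (hpos : σ k * u s k < σ k * v s k) : σ k * u b k < σ k * v b k := by
  have huc : ContinuousOn u (Icc a b) := fun s hs => (hu s hs).continuousWithinAt
  have hvc : ContinuousOn v (Icc a b) := fun s hs => (hv s hs).continuousWithinAt
  obtain ⟨M, hM⟩ := exists_bound_on_segments hJ huc hvc hseg
  have hgap : 0 < σ k * (v b k - u b k) := by
    refine pos_of_neg_mul_le_deriv (f := fun τ => σ k * (v τ k - u τ k))
      (f' := fun τ => σ k * (F (v τ) k - F (u τ) k)) (M := M) hs.2 ?_
      (fun τ hτ => ?_) (fun τ hτ => ?_) (by linarith [mul_sub (σ k) (v s k) (u s k)])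
    · refine ContinuousOn.mono ?_ (Icc_subset_Icc_left hs.1)
      exact continuousOn_const.mul (((continuous_apply k).comp_continuousOn hvc).sub
        ((continuous_apply k).comp_continuousOn huc))
    · have hτ' : τ ∈ Icc a b := ⟨hs.1.trans hτ.1, hτ.2.le⟩
      have hnhds : Icc a b ∈ 𝓝[≥] τ :=
        mem_of_superset (Icc_mem_nhdsGE hτ.2) (Icc_subset_Icc_left hτ'.1)
      exact ((hu τ hτ').coord_gap (hv τ hτ') (σ k) k).mono_of_mem_nhdsWithin hnhds
    · have hτ' : τ ∈ Icc a b := ⟨hs.1.trans hτ.1, hτ.2.le⟩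
      exact neg_mul_le_sub_apply_of_segment_subset hF hcoop (hle τ hτ') (hseg τ hτ')
        (hM τ hτ') k
  linarith [mul_sub (σ k) (v b k) (u b k)]

lemma apply_eq_of_gap_eq_zero (hF : ∀ z ∈ W, HasFDerivAt F (J z) z) (hJ : ContinuousOn J W)
    (hcoop : ∀ z ∈ W, IsCooperative σ (J z)) (hab : a < b)
    (hu : ∀ s ∈ Icc a b, HasDerivWithinAt u (F (u s)) (Icc a b) s)
    (hv : ∀ s ∈ Icc a b, HasDerivWithinAt v (F (v s)) (Icc a b) s)
    (hle : ∀ s ∈ Icc a b, ∀ j, σ j * u s j ≤ σ j * v s j)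
    (hseg : ∀ s ∈ Icc a b, segment ℝ (u s) (v s) ⊆ W) {k : ι} (hσk : σ k ≠ 0)
    (hb : u b k = v b k) : F (u b) k = F (v b) k := by
  have hb' : b ∈ Icc a b := ⟨hab.le, le_rfl⟩
  have hzero : ∀ s ∈ Icc a b, σ k * (v s k - u s k) = 0 := by
    intro s hs
    by_contra hne
    have hpos : σ k * u s k < σ k * v s k :=
      lt_of_le_of_ne (hle s hs k) fun h => hne (by rw [mul_sub, h, sub_self])
    exact (gap_pos_at_right_of_pos hF hJ hcoop hu hv hle hseg hs hpos).ne (by rw [hb])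
  have hderiv := (hu b hb').coord_gap (hv b hb') (σ k) k
  have hconst : HasDerivWithinAt (fun τ => σ k * (v τ k - u τ k)) 0 (Icc a b) b :=
    (hasDerivWithinAt_const b _ 0).congr hzero (hzero b hb')
  have := (uniqueDiffOn_Icc hab b hb').eq_deriv _ hderiv hconst
  simpa [hσk, sub_eq_zero, eq_comm] using this

lemma gap_pos_of_isIrreducibleMap [DecidableEq ι] (hQ : QuasimonotoneOn σ F W)
    (hF : ∀ z ∈ W, HasFDerivAt F (J z) z) (hJ : ContinuousOn J W)
    (hcoop : ∀ z ∈ W, IsCooperative σ (J z)) (hσ : ∀ k, σ k ≠ 0) (hab : a < b)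
    (hu : ∀ s ∈ Icc a b, HasDerivWithinAt u (F (u s)) (Icc a b) s)
    (hv : ∀ s ∈ Icc a b, HasDerivWithinAt v (F (v s)) (Icc a b) s)
    (hle : ∀ s ∈ Icc a b, ∀ j, σ j * u s j ≤ σ j * v s j)
    (hseg : ∀ s ∈ Icc a b, segment ℝ (u s) (v s) ⊆ W) (hirr : IsIrreducibleMap (J (u b)))
    {k₀ : ι} (hk₀ : σ k₀ * u a k₀ < σ k₀ * v a k₀) (i : ι) : σ i * u b i < σ i * v b i := by
  have hb : b ∈ Icc a b := ⟨hab.le, le_rfl⟩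
  by_contra! hi
  set S := Finset.univ.filter fun k => u b k = v b k
  have hiS : i ∈ S := by
    simpa [S] using mul_left_cancel₀ (hσ i) (le_antisymm (hle b hb i) hi)
  have hk₀S : k₀ ∉ S := by
    have := gap_pos_at_right_of_pos hF hJ hcoop hu hv hle hseg ⟨le_rfl, hab.le⟩ hk₀
    simpa [S] using fun h => this.ne (by rw [h])
  obtain ⟨k, hkS, m, hmS, hJkm⟩ := hirr S ⟨i, hiS⟩ fun h => hk₀S (h ▸ Finset.mem_univ k₀)
  simp only [S, Finset.mem_filter, Finset.mem_univ, true_and] at hkS hmS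
  have hub : u b ∈ W := hseg b hb (left_mem_segment ℝ _ _)
  refine hJkm ((hcoop _ hub).apply_single_eq_zero (δ := v b - u b) (fun j => ?_) (hσ k)
    (by simp [hkS]) (sub_ne_zero.mpr (Ne.symm hmS)) ?_)
  · simpa [mul_sub] using hle b hb j
  · exact hQ.fderiv_sub_nonpos (hF _ hub) (hseg b hb) (hle b hb) hkS
      (apply_eq_of_gap_eq_zero hF hJ hcoop hab hu hv hle hseg (hσ k) hkS)

end Flow

theorem monotone_irreducible_implies_strongly_monotone_general
    (n : ℕ) (σ : Fin n → ℝ) (hσ : ∀ i, σ i = 1 ∨ σ i = -1)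
    (W : Set (Fin n → ℝ)) (hWopen : IsOpen W)
    (hpconv : ∀ u ∈ W, ∀ v ∈ W, (∀ i, σ i * u i ≤ σ i * v i) →
        ∀ t ∈ Set.Icc (0 : ℝ) 1, (1 - t) • u + t • v ∈ W)
    (F : (Fin n → ℝ) → Fin n → ℝ)
    (J : (Fin n → ℝ) → (Fin n → ℝ) →L[ℝ] (Fin n → ℝ))
    (hF : ∀ z ∈ W, HasFDerivAt F (J z) z)
    (hJcont : ContinuousOn J W)
    (φ : ℝ → (Fin n → ℝ) → Fin n → ℝ)
    (hinv : ∀ t ∈ Set.Ici (0 : ℝ), ∀ z ∈ W, φ t z ∈ W)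
    (hφ0 : ∀ z ∈ W, φ 0 z = z)
    (hode : ∀ z ∈ W, ∀ t ∈ Set.Ici (0 : ℝ),
        HasDerivWithinAt (fun τ => φ τ z) (F (φ t z)) (Set.Ici 0) t)
    (hmono : ∀ t ∈ Set.Ici (0 : ℝ), ∀ z₁ ∈ W, ∀ z₂ ∈ W,
        (∀ i, σ i * z₁ i ≤ σ i * z₂ i) → ∀ i, σ i * φ t z₁ i ≤ σ i * φ t z₂ i)
    (hirr : ∀ z ∈ W, ∀ S : Finset (Fin n), S.Nonempty → S ≠ Finset.univ →
        ∃ i ∈ S, ∃ j, j ∉ S ∧ J z (Pi.single j 1) i ≠ 0) :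
    ∀ z₁ ∈ W, ∀ z₂ ∈ W, (∀ i, σ i * z₁ i ≤ σ i * z₂ i) → z₁ ≠ z₂ →
      ∀ t > (0 : ℝ), ∀ i, σ i * φ t z₁ i < σ i * φ t z₂ i := by
  intro z₁ hz₁ z₂ hz₂ hle hne t ht
  have hσ0 : ∀ k, σ k ≠ 0 := fun k => by rcases hσ k with h | h <;> simp [h]
  have hQ : QuasimonotoneOn σ F W := quasimonotoneOn_of_monotone_flow hφ0
    (fun z hz => by simpa only [hφ0 z hz] using hode z hz 0 self_mem_Ici) hmono
  have hle_t : ∀ s ∈ Icc 0 t, ∀ j, σ j * φ s z₁ j ≤ σ j * φ s z₂ j :=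
    fun s hs => hmono s hs.1 z₁ hz₁ z₂ hz₂ hle
  have hseg : ∀ s ∈ Icc 0 t, segment ℝ (φ s z₁) (φ s z₂) ⊆ W := by
    intro s hs
    rw [segment_eq_image]
    rintro _ ⟨θ, hθ, rfl⟩
    exact hpconv _ (hinv s hs.1 z₁ hz₁) _ (hinv s hs.1 z₂ hz₂) (hle_t s hs) θ hθ
  have htraj : ∀ z ∈ W, ∀ s ∈ Icc 0 t,
      HasDerivWithinAt (fun τ => φ τ z) (F (φ s z)) (Icc 0 t) s :=
    fun z hz s hs => (hode z hz s hs.1).mono Icc_subset_Ici_self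
  obtain ⟨k₀, hk₀⟩ := Function.ne_iff.mp hne
  refine gap_pos_of_isIrreducibleMap (k₀ := k₀) hQ hF hJcont
    (fun z hz => hQ.isCooperative hWopen hz (hF z hz)) hσ0 ht (htraj z₁ hz₁) (htraj z₂ hz₂)
    hle_t hseg (hirr _ (hinv t ht.le z₁ hz₁)) ?_
  rw [hφ0 z₁ hz₁, hφ0 z₂ hz₂]
  exact lt_of_le_of_ne (hle k₀) fun h => hk₀ (mul_left_cancel₀ (hσ0 k₀) h)

/-- Corollary 1: if `W` is open and p-convex with respect to the orthant order
`≤_σ`, the flow `φ` generated by the `C¹` vector field `F` is monotone with respect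
to `≤_σ`, and the Jacobian of `F` is irreducible at every point of `W`, then the
flow is strongly monotone on `W`. -/
theorem monotone_irreducible_implies_strongly_monotone
    (n : ℕ) (σ : Fin n → ℝ) (hσ : ∀ i, σ i = 1 ∨ σ i = -1)
    (W : Set (Fin n → ℝ)) (hWopen : IsOpen W)
    (hpconv : ∀ u ∈ W, ∀ v ∈ W, (∀ i, σ i * u i ≤ σ i * v i) →
        ∀ t ∈ Set.Icc (0 : ℝ) 1, (1 - t) • u + t • v ∈ W)
    (F : (Fin n → ℝ) → Fin n → ℝ)
    (J : (Fin n → ℝ) → (Fin n → ℝ) →L[ℝ] (Fin n → ℝ))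
    (hF : ∀ z ∈ W, HasFDerivAt F (J z) z)
    (hJcont : ContinuousOn J W)
    (φ : ℝ → (Fin n → ℝ) → Fin n → ℝ)
    (hinv : ∀ t ∈ Set.Ici (0 : ℝ), ∀ z ∈ W, φ t z ∈ W)
    (hφ0 : ∀ z ∈ W, φ 0 z = z)
    (hode : ∀ z ∈ W, ∀ t ∈ Set.Ici (0 : ℝ),
        HasDerivWithinAt (fun τ => φ τ z) (F (φ t z)) (Set.Ici 0) t)
    (Dφ : ℝ → (Fin n → ℝ) → (Fin n → ℝ) →L[ℝ] (Fin n → ℝ))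
    (hDφ : ∀ t ∈ Set.Ici (0 : ℝ), ∀ z ∈ W, HasFDerivAt (φ t) (Dφ t z) z)
    (hDφcont : ∀ t ∈ Set.Ici (0 : ℝ), ContinuousOn (Dφ t) W)
    (hmono : ∀ t ∈ Set.Ici (0 : ℝ), ∀ z₁ ∈ W, ∀ z₂ ∈ W,
        (∀ i, σ i * z₁ i ≤ σ i * z₂ i) → ∀ i, σ i * φ t z₁ i ≤ σ i * φ t z₂ i)
    (hirr : ∀ z ∈ W, ∀ S : Finset (Fin n), S.Nonempty → S ≠ Finset.univ →
        ∃ i ∈ S, ∃ j, j ∉ S ∧ J z (Pi.single j 1) i ≠ 0) :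
    ∀ z₁ ∈ W, ∀ z₂ ∈ W, (∀ i, σ i * z₁ i ≤ σ i * z₂ i) → z₁ ≠ z₂ →
      ∀ t > (0 : ℝ), ∀ i, σ i * φ t z₁ i < σ i * φ t z₂ i :=
  monotone_irreducible_implies_strongly_monotone_general n σ hσ W hWopen hpconv F J hF hJcont φ hinv
    hφ0 hode hmono hirr
end
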